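/- arXiv:2302.11005 — 3 statements merged into one kernel-verified Lean document; each statement's English description precedes it below -/
import Mathlib

section
/- Let x = (x₁,…,xₙ) ∈ Φⁿ \ {0} have at least two nonzero entries, and let I be a closed arc in S¹ of minimal length containing all nonzero entries xₖ. Then 0 ∈ x₁ ⊞ ⋯ ⊞ xₙ if and only if the length of I is at least π. -/
open Complex Set

noncomputable section

/-- The unit circle `S¹ ⊂ ℂ`. -/
def unitCircle : Set ℂ := Metric.sphere 0 1

/-- The tropical phase hyperfield `Φ = S¹ ∪ {0} ⊂ ℂ`. -/
def Phi : Set ℂ := unitCircle ∪ {0}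

/-- The smallest closed arc of `S¹` joining two non-zero, non-antipodal unit
complex numbers `x` and `y`: the set of phases of nonnegative combinations of `x,y`. -/
def smallArc (x y : ℂ) : Set ℂ :=
  {z : ℂ | ∃ a b : ℝ, 0 ≤ a ∧ 0 ≤ b ∧ 0 < a + b ∧
    z = ((a : ℂ) * x + (b : ℂ) * y) / ((‖(a : ℂ) * x + (b : ℂ) * y‖ : ℝ) : ℂ)}

/-- Hyperaddition in the tropical phase hyperfield. -/
def hadd (x y : ℂ) : Set ℂ :=
  if x = 0 then {y} else if y = 0 then {x} else if y = -x then Phi else smallArc x y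

/-- Iterated hypersum `x₁ ⊞ ⋯ ⊞ xₙ` (unions over intermediate choices). -/
def haddList : List ℂ → Set ℂ
  | [] => {0}
  | a :: l => ⋃ w ∈ haddList l, hadd a w

open scoped Classical

/-- The closed arc `{e^{iθ} : θ ∈ [a, a + L]}` of `S¹`, of length `L` starting at angle `a`. -/
def arcOf (a L : ℝ) : Set ℂ :=
  (fun θ : ℝ => Complex.exp ((θ : ℂ) * Complex.I)) '' Set.Icc a (a + L)

/-- The number of nonzero entries of `x`. -/
def suppCard {n : ℕ} (x : Fin n → ℂ) : ℕ :=
  (Finset.univ.filter (fun j => x j ≠ 0)).card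

/-!
If the arc is shorter than `π`, every nonzero entry lies in the open half-plane facing its
midpoint. Two points of that half-plane are never antipodal, so their hypersum is the short arc
between them, which stays in the half-plane; hence the hypersum of the entries misses `0`.

If no arc shorter than `π` contains the nonzero entries, no open half-plane does, so by Gordan's
alternative some nonnegative combination `∑ cₖ xₖ` vanishes with a term `cₖ xₖ ≠ 0`. A hypersum
contains the phase of every nonzero nonnegative combination of its terms. At the first index with
`cₖ xₖ ≠ 0` the later terms therefore produce the phase `-xₖ` of `-cₖ xₖ`, and
`xₖ ⊞ (-xₖ) = Φ`; the earlier terms, all zero or of weight zero, keep `Φ` in the hypersum.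
-/

open scoped InnerProductSpace ComplexConjugate

lemma mem_Phi_iff {z : ℂ} : z ∈ Phi ↔ z = 0 ∨ ‖z‖ = 1 := by
  simp [Phi, unitCircle]

lemma zero_mem_Phi : (0 : ℂ) ∈ Phi := mem_Phi_iff.2 (Or.inl rfl)

lemma norm_eq_one_of_mem_Phi {z : ℂ} (h : z ∈ Phi) (h0 : z ≠ 0) : ‖z‖ = 1 :=
  (mem_Phi_iff.1 h).resolve_left h0

lemma neg_mem_Phi {z : ℂ} (h : z ∈ Phi) : -z ∈ Phi := by
  simpa [mem_Phi_iff] using h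

lemma div_norm_mem_Phi (s : ℂ) : s / ‖s‖ ∈ Phi := by
  rcases eq_or_ne s 0 with rfl | hs
  · simp [zero_mem_Phi]
  · simp [mem_Phi_iff, hs]

lemma smul_div_norm_smul {x : ℂ} (hx : ‖x‖ = 1) {c : ℝ} (hc : 0 < c) : c • x / ‖c • x‖ = x := by
  rw [norm_smul, hx, mul_one, Real.norm_of_nonneg hc.le, Complex.real_smul,
    mul_div_cancel_left₀ _ (by exact_mod_cast hc.ne')]

lemma hadd_zero_left (y : ℂ) : hadd 0 y = {y} := by simp [hadd]

lemma hadd_zero_right {x : ℂ} (hx : x ≠ 0) : hadd x 0 = {x} := by simp [hadd, hx]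

lemma hadd_neg_self {x : ℂ} (hx : x ≠ 0) : hadd x (-x) = Phi := by simp [hadd, hx]

lemma hadd_eq_smallArc {x y : ℂ} (hx : x ≠ 0) (hy : y ≠ 0) (hxy : y ≠ -x) :
    hadd x y = smallArc x y := by
  simp [hadd, hx, hy, hxy]

lemma left_mem_hadd {x : ℂ} (hx : x ∈ Phi) (h0 : x ≠ 0) (y : ℂ) : x ∈ hadd x y := by
  have hx1 := norm_eq_one_of_mem_Phi hx h0
  rcases eq_or_ne y 0 with rfl | hy
  · simp [hadd_zero_right h0]
  rcases eq_or_ne y (-x) with rfl | hxy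
  · rwa [hadd_neg_self h0]
  rw [hadd_eq_smallArc h0 hy hxy]
  exact ⟨1, 0, zero_le_one, le_rfl, by norm_num, by simp [hx1]⟩

lemma mem_haddList_cons {z a : ℂ} {l : List ℂ} :
    z ∈ haddList (a :: l) ↔ ∃ w ∈ haddList l, z ∈ hadd a w := by
  simp [haddList]

lemma haddList_nonempty : ∀ {l : List ℂ}, (∀ z ∈ l, z ∈ Phi) → (haddList l).Nonempty
  | [], _ => ⟨0, rfl⟩
  | a :: l, h => by
    obtain ⟨w, hw⟩ := haddList_nonempty fun z hz => h z (List.mem_cons_of_mem a hz)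
    rcases eq_or_ne a 0 with rfl | ha
    · exact ⟨w, mem_haddList_cons.2 ⟨w, hw, by simp [hadd_zero_left]⟩⟩
    · exact ⟨a, mem_haddList_cons.2 ⟨w, hw, left_mem_hadd (h a List.mem_cons_self) ha w⟩⟩

lemma Phi_subset_haddList_cons {a : ℂ} {l : List ℂ} (ha : a ∈ Phi) (h : Phi ⊆ haddList l) :
    Phi ⊆ haddList (a :: l) := by
  intro z hz
  rcases eq_or_ne a 0 with rfl | ha0
  · exact mem_haddList_cons.2 ⟨z, h hz, by simp [hadd_zero_left]⟩
  · exact mem_haddList_cons.2 ⟨-a, h (neg_mem_Phi ha), by rwa [hadd_neg_self ha0]⟩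

/-- In the `smallArc` case the witnessing weights are `c` and `‖s‖`. -/
lemma div_norm_add_mem_hadd {x s : ℂ} (hx : x ∈ Phi) {c : ℝ} (hc : 0 ≤ c) (hs : s ≠ 0) :
    (c • x + s) / ‖c • x + s‖ ∈ hadd x (s / ‖s‖) := by
  have hs' : (‖s‖ : ℂ) ≠ 0 := by exact_mod_cast norm_ne_zero_iff.2 hs
  rcases eq_or_ne x 0 with rfl | hx0
  · simp [hadd_zero_left]
  have hw0 : s / ‖s‖ ≠ 0 := div_ne_zero hs hs'
  rcases eq_or_ne (s / ‖s‖) (-x) with hxw | hxw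
  · rw [hxw, hadd_neg_self hx0]
    exact div_norm_mem_Phi _
  rw [hadd_eq_smallArc hx0 hw0 hxw]
  refine ⟨c, ‖s‖, hc, norm_nonneg s, by positivity, ?_⟩
  rw [mul_div_cancel₀ _ hs', Complex.real_smul]

theorem div_norm_sum_smul_mem_haddList {n : ℕ} {x : Fin n → ℂ} {c : Fin n → ℝ}
    (hx : ∀ k, x k ∈ Phi) (hc : ∀ k, 0 ≤ c k) (hs : ∑ k, c k • x k ≠ 0) :
    (∑ k, c k • x k) / ‖∑ k, c k • x k‖ ∈ haddList (List.ofFn x) := by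
  induction n with
  | zero => simp at hs
  | succ n ih =>
    rw [Fin.sum_univ_succ] at hs ⊢
    rw [List.ofFn_succ, mem_haddList_cons]
    by_cases htail : ∑ k : Fin n, c k.succ • x k.succ = 0
    · rw [htail, add_zero] at hs ⊢
      have hx0 : x 0 ≠ 0 := right_ne_zero_of_smul hs
      have hc0 : 0 < c 0 := (hc 0).lt_of_ne' (left_ne_zero_of_smul hs)
      obtain ⟨w, hw⟩ := haddList_nonempty (l := List.ofFn fun k : Fin n => x k.succ)
        (by simp [List.mem_ofFn, hx])
      rw [smul_div_norm_smul (norm_eq_one_of_mem_Phi (hx 0) hx0) hc0]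
      exact ⟨w, hw, left_mem_hadd (hx 0) hx0 w⟩
    · exact ⟨_, ih (fun k => hx k.succ) (fun k => hc k.succ) htail,
        div_norm_add_mem_hadd (hx 0) (hc 0) htail⟩

theorem Phi_subset_haddList_of_sum_smul_eq_zero {n : ℕ} {x : Fin n → ℂ} {c : Fin n → ℝ}
    (hx : ∀ k, x k ∈ Phi) (hc : ∀ k, 0 ≤ c k) (hsum : ∑ k, c k • x k = 0)
    (hpos : ∃ k, 0 < c k ∧ x k ≠ 0) : Phi ⊆ haddList (List.ofFn x) := by
  induction n with
  | zero => simp at hpos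
  | succ n ih =>
    rw [Fin.sum_univ_succ, add_eq_zero_iff_eq_neg'] at hsum
    rw [List.ofFn_succ]
    by_cases hhead : 0 < c 0 ∧ x 0 ≠ 0
    · -- the tail sums to `-(c 0 • x 0)`, whose phase `-x 0` cancels the head
      have hx0 := norm_eq_one_of_mem_Phi (hx 0) hhead.2
      have htail : ∑ k : Fin n, c k.succ • x k.succ ≠ 0 := by
        rw [hsum, neg_ne_zero]; exact smul_ne_zero hhead.1.ne' hhead.2
      have hmem := div_norm_sum_smul_mem_haddList (fun k => hx k.succ) (fun k => hc k.succ) htail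
      rw [hsum, ← smul_neg, smul_div_norm_smul (by rwa [norm_neg]) hhead.1] at hmem
      intro z hz
      exact mem_haddList_cons.2 ⟨-x 0, hmem, by rwa [hadd_neg_self hhead.2]⟩
    · have hhead0 : c 0 • x 0 = 0 := by
        rcases not_and_or.1 hhead with h | h
        · simp [le_antisymm (not_lt.1 h) (hc 0)]
        · simp [not_not.1 h]
      rw [hhead0, neg_zero] at hsum
      obtain ⟨k, hk⟩ := Fin.exists_fin_succ.1 hpos |>.resolve_left hhead
      exact Phi_subset_haddList_cons (hx 0)
        (ih (fun k => hx k.succ) (fun k => hc k.succ) hsum ⟨k, hk⟩)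

lemma inner_pos_of_mem_smallArc {u x y : ℂ} (hx : 0 < ⟪u, x⟫_ℝ) (hy : 0 < ⟪u, y⟫_ℝ) {z : ℂ}
    (hz : z ∈ smallArc x y) : 0 < ⟪u, z⟫_ℝ := by
  obtain ⟨a, b, ha, hb, hab, rfl⟩ := hz
  set v := (a : ℂ) * x + (b : ℂ) * y
  have hv : 0 < ⟪u, v⟫_ℝ := by
    simp only [v, ← Complex.real_smul, inner_add_right, real_inner_smul_right]
    rcases ha.eq_or_lt with rfl | ha'
    · simp only [zero_add] at hab ⊢; positivity
    · positivity
  have hv0 : v ≠ 0 := by rintro h; simp [h] at hv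
  rw [div_eq_inv_mul, ← Complex.ofReal_inv, ← Complex.real_smul, real_inner_smul_right]
  exact mul_pos (inv_pos.2 (norm_pos_iff.2 hv0)) hv

lemma inner_pos_of_mem_hadd {u x y : ℂ} (hx : 0 < ⟪u, x⟫_ℝ) (hy : 0 < ⟪u, y⟫_ℝ) {z : ℂ}
    (hz : z ∈ hadd x y) : 0 < ⟪u, z⟫_ℝ := by
  have hne : ∀ w : ℂ, 0 < ⟪u, w⟫_ℝ → w ≠ 0 := by rintro w hw rfl; simp at hw
  have hxy : y ≠ -x := by rintro rfl; rw [inner_neg_right] at hy; linarith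
  rw [hadd_eq_smallArc (hne x hx) (hne y hy) hxy] at hz
  exact inner_pos_of_mem_smallArc hx hy hz

theorem inner_pos_or_forall_eq_zero_of_mem_haddList (u : ℂ) :
    ∀ {l : List ℂ}, (∀ z ∈ l, z ≠ 0 → 0 < ⟪u, z⟫_ℝ) →
      ∀ w ∈ haddList l, 0 < ⟪u, w⟫_ℝ ∨ (w = 0 ∧ ∀ z ∈ l, z = 0)
  | [], _, w, hw => Or.inr ⟨hw, by simp⟩
  | a :: l, hl, z, hz => by
    obtain ⟨w, hw, hzw⟩ := mem_haddList_cons.1 hz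
    have hla : a ≠ 0 → 0 < ⟪u, a⟫_ℝ := hl a List.mem_cons_self
    rcases inner_pos_or_forall_eq_zero_of_mem_haddList u
      (fun z hz => hl z (List.mem_cons_of_mem a hz)) w hw with hw' | ⟨rfl, hl0⟩
    · rcases eq_or_ne a 0 with rfl | ha
      · rw [hadd_zero_left, Set.mem_singleton_iff] at hzw
        exact Or.inl (hzw ▸ hw')
      · exact Or.inl (inner_pos_of_mem_hadd (hla ha) hw' hzw)
    · rcases eq_or_ne a 0 with rfl | ha
      · rw [hadd_zero_left, Set.mem_singleton_iff] at hzw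
        exact Or.inr ⟨hzw, by simpa using hl0⟩
      · rw [hadd_zero_right ha, Set.mem_singleton_iff] at hzw
        exact Or.inl (hzw ▸ hla ha)

theorem forall_eq_zero_of_zero_mem_haddList {u : ℂ} {l : List ℂ}
    (hl : ∀ z ∈ l, z ≠ 0 → 0 < ⟪u, z⟫_ℝ) (h0 : 0 ∈ haddList l) : ∀ z ∈ l, z = 0 := by
  obtain h | ⟨-, hall⟩ := inner_pos_or_forall_eq_zero_of_mem_haddList u hl 0 h0
  · simp at h
  · exact hall

theorem exists_nonneg_sum_smul_eq_zero_of_zero_mem_convexHull {ι E : Type*} [Fintype ι]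
    [AddCommGroup E] [Module ℝ E] {x : ι → E} {s : Set ι}
    (h : (0 : E) ∈ convexHull ℝ (x '' s)) :
    ∃ c : ι → ℝ, (∀ i, 0 ≤ c i) ∧ ∑ i, c i • x i = 0 ∧ ∃ i ∈ s, 0 < c i := by
  let P : Set E := {v | ∃ c : ι → ℝ, (∀ i, 0 ≤ c i) ∧ ∑ i, c i = 1 ∧ (∀ i ∉ s, c i = 0) ∧
    ∑ i, c i • x i = v}
  have hP : convexHull ℝ (x '' s) ⊆ P := by
    refine convexHull_min ?_ ?_
    · rintro _ ⟨i, hi, rfl⟩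
      refine ⟨Pi.single i 1, fun j => ?_, by simp, fun j hj => ?_, by simp [Pi.single_apply]⟩
      · by_cases hj : j = i <;> simp [hj]
      · simp [show j ≠ i by rintro rfl; exact hj hi]
    · rintro _ ⟨c, hc0, hc1, hcs, rfl⟩ _ ⟨d, hd0, hd1, hds, rfl⟩ a b ha hb hab
      refine ⟨a • c + b • d, fun i => ?_, ?_, fun i hi => by simp [hcs i hi, hds i hi], ?_⟩
      · have := hc0 i; have := hd0 i; simp only [Pi.add_apply, Pi.smul_apply, smul_eq_mul]
        positivity
      · simp [Finset.sum_add_distrib, ← Finset.mul_sum, hc1, hd1, hab]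
      · simp [add_smul, Finset.sum_add_distrib, Finset.smul_sum, smul_smul]
  obtain ⟨c, hc0, hc1, hcs, hsum⟩ := hP h
  obtain ⟨i, -, hi⟩ : ∃ i ∈ Finset.univ, (0 : ℝ) < c i :=
    Finset.exists_lt_of_sum_lt (by simp [hc1])
  exact ⟨c, hc0, hsum, i, by_contra fun his => hi.ne' (hcs i his), hi⟩

/-- Gordan's alternative for a finite family of vectors. -/
theorem exists_nonneg_sum_smul_eq_zero_or_exists_inner_pos {ι E : Type*} [Fintype ι]
    [NormedAddCommGroup E] [InnerProductSpace ℝ E] [CompleteSpace E] (x : ι → E) (s : Set ι) :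
    (∃ c : ι → ℝ, (∀ i, 0 ≤ c i) ∧ ∑ i, c i • x i = 0 ∧ ∃ i ∈ s, 0 < c i) ∨
      ∃ u : E, ∀ i ∈ s, 0 < ⟪u, x i⟫_ℝ := by
  by_cases h : (0 : E) ∈ convexHull ℝ (x '' s)
  · exact Or.inl (exists_nonneg_sum_smul_eq_zero_of_zero_mem_convexHull h)
  obtain ⟨f, r, hf0, hf⟩ := geometric_hahn_banach_point_closed (convex_convexHull ℝ _)
    ((s.toFinite.image x).isClosed_convexHull (𝕜 := ℝ)) h
  refine Or.inr ⟨(InnerProductSpace.toDual ℝ E).symm f, fun i hi => ?_⟩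
  rw [InnerProductSpace.toDual_symm_apply]
  have := hf (x i) (subset_convexHull ℝ _ ⟨i, hi, rfl⟩)
  rw [map_zero] at hf0
  linarith

lemma inner_exp_mul_I (φ θ : ℝ) :
    ⟪Complex.exp (φ * I), Complex.exp (θ * I)⟫_ℝ = Real.cos (θ - φ) := by
  rw [Complex.inner, ← Complex.exp_conj, ← Complex.exp_add, map_mul, Complex.conj_ofReal,
    Complex.conj_I, ← Complex.exp_ofReal_mul_I_re]
  push_cast
  ring_nf

theorem inner_pos_of_mem_arcOf {a L : ℝ} (hL : L < Real.pi) {z : ℂ} (hz : z ∈ arcOf a L) :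
    0 < ⟪Complex.exp ((a + L / 2 : ℝ) * I), z⟫_ℝ := by
  obtain ⟨θ, ⟨hθa, hθL⟩, rfl⟩ := hz
  rw [inner_exp_mul_I]
  exact Real.cos_pos_of_mem_Ioo ⟨by linarith, by linarith⟩

lemma exp_arg_mul_I {w : ℂ} (hw : w ≠ 0) : Complex.exp (arg w * I) = w / ‖w‖ := by
  rw [eq_div_iff (by exact_mod_cast norm_ne_zero_iff.2 hw), mul_comm, norm_mul_exp_arg_mul_I]

lemma exp_arg_add_arg_mul_conj {u z : ℂ} (hu : u ≠ 0) (hz : ‖z‖ = 1) :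
    Complex.exp ((arg u + arg (z * conj u) : ℝ) * I) = z := by
  have hz0 : z ≠ 0 := by rintro rfl; simp at hz
  have hu' : (‖u‖ : ℂ) ≠ 0 := by exact_mod_cast norm_ne_zero_iff.2 hu
  rw [Complex.ofReal_add, add_mul, Complex.exp_add, exp_arg_mul_I hu,
    exp_arg_mul_I (mul_ne_zero hz0 ((map_ne_zero _).2 hu)), norm_mul, Complex.norm_conj, hz,
    one_mul, div_mul_div_comm, mul_left_comm, Complex.mul_conj, Complex.normSq_eq_norm_sq]
  field_simp
  push_cast
  ring

theorem exists_arcOf_lt_pi_of_inner_pos {ι : Type*} {s : Finset ι} (hs : s.Nonempty) {z : ι → ℂ}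
    (hz : ∀ i ∈ s, ‖z i‖ = 1) {u : ℂ} (hu : ∀ i ∈ s, 0 < ⟪u, z i⟫_ℝ) :
    ∃ a L, 0 ≤ L ∧ L < Real.pi ∧ ∀ i ∈ s, z i ∈ arcOf a L := by
  have hu0 : u ≠ 0 := by
    obtain ⟨i, hi⟩ := hs
    rintro rfl; simpa using hu i hi
  -- angles measured from `u` lie in `(-π/2, π/2)`; take the arc from the least to the greatest
  let θ : ι → ℝ := fun i => arg (z i * conj u)
  have hθ : ∀ i ∈ s, |θ i| < Real.pi / 2 := fun i hi =>
    Complex.abs_arg_lt_pi_div_two_iff.2 (Or.inl (by simpa [Complex.inner] using hu i hi))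
  obtain ⟨i₁, hi₁, hmax⟩ := s.exists_mem_eq_sup' hs θ
  obtain ⟨i₂, hi₂, hmin⟩ := s.exists_mem_eq_inf' hs θ
  refine ⟨arg u + s.inf' hs θ, s.sup' hs θ - s.inf' hs θ,
    sub_nonneg.2 ((s.inf'_le θ hi₁).trans (s.le_sup' θ hi₁)), ?_,
    fun i hi => ⟨arg u + θ i, ⟨?_, ?_⟩, ?_⟩⟩
  · have h₁ := abs_lt.1 (hθ i₁ hi₁); have h₂ := abs_lt.1 (hθ i₂ hi₂)
    rw [hmax, hmin]; linarith [h₁.2, h₂.1]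
  · linarith [s.inf'_le θ hi]
  · linarith [s.le_sup' θ hi]
  · exact exp_arg_add_arg_mul_conj hu0 (hz i hi)

theorem zero_mem_haddList_iff_arc_length_general (n : ℕ) (x : Fin n → ℂ)
    (hx : ∀ k, x k ∈ Phi) (hsupp : 2 ≤ suppCard x)
    (a L : ℝ)
    (hI : ∀ k, x k ≠ 0 → x k ∈ arcOf a L)
    (hmin : ∀ a' L' : ℝ, 0 ≤ L' → (∀ k, x k ≠ 0 → x k ∈ arcOf a' L') → L ≤ L') :
    (0 : ℂ) ∈ haddList (List.ofFn x) ↔ Real.pi ≤ L := by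
  obtain ⟨k₀, hk₀⟩ : ∃ k, x k ≠ 0 := by
    by_contra! h
    simp [suppCard, h] at hsupp
  constructor
  · intro h0
    by_contra! hL
    refine hk₀ (forall_eq_zero_of_zero_mem_haddList (u := Complex.exp ((a + L / 2 : ℝ) * I)) ?_ h0
      _ (List.mem_ofFn.2 ⟨k₀, rfl⟩))
    simp only [List.mem_ofFn]
    rintro _ ⟨k, rfl⟩ hk
    exact inner_pos_of_mem_arcOf hL (hI k hk)
  · intro hL
    obtain ⟨c, hc, hsum, k, hk, hck⟩ | ⟨u, hu⟩ :=
      exists_nonneg_sum_smul_eq_zero_or_exists_inner_pos x {k | x k ≠ 0}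
    · exact Phi_subset_haddList_of_sum_smul_eq_zero hx hc hsum ⟨k, hck, hk⟩ zero_mem_Phi
    obtain ⟨a', L', hL'0, hL'π, harc⟩ := exists_arcOf_lt_pi_of_inner_pos
      (s := Finset.univ.filter fun k => x k ≠ 0) ⟨k₀, by simpa using hk₀⟩
      (fun k hk => norm_eq_one_of_mem_Phi (hx k) (Finset.mem_filter.1 hk).2)
      (fun k hk => hu k (Finset.mem_filter.1 hk).2)
    linarith [hmin a' L' hL'0 fun k hk => harc k (by simpa using hk)]

/-- Let `x ∈ Φⁿ \ {0}` have at least two nonzero entries and let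
`I = arcOf a L` be a closed arc of `S¹` of minimal length `L ≥ 0` containing
all nonzero entries of `x`.  Then `0 ∈ x₁ ⊞ ⋯ ⊞ xₙ` iff `L ≥ π`. -/
theorem zero_mem_haddList_iff_arc_length (n : ℕ) (x : Fin n → ℂ)
    (hx : ∀ k, x k ∈ Phi) (hsupp : 2 ≤ suppCard x)
    (a L : ℝ) (hL : 0 ≤ L)
    (hI : ∀ k, x k ≠ 0 → x k ∈ arcOf a L)
    (hmin : ∀ a' L' : ℝ, 0 ≤ L' → (∀ k, x k ≠ 0 → x k ∈ arcOf a' L') → L ≤ L') :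
    (0 : ℂ) ∈ haddList (List.ofFn x) ↔ Real.pi ≤ L :=
  zero_mem_haddList_iff_arc_length_general n x hx hsupp a L hI hmin
end
end

section
/- The topological order complex Δ(Φⁿ) is homeomorphic to the n-fold product (Δ(Φ))ⁿ; explicitly, the map γ sending a formal convex combination z = Σₖ tₖ xₖ (over a chain x₀ ≤ ⋯ ≤ xₙ in Φⁿ) to the n-tuple whose j-th coordinate is the join point determined by the first index ℓ(z,j) at which the j-th coordinate becomes nonzero, is a homeomorphism. -/
open Complex Set

noncomputable section

/-- The partial order on `Φ`: the only nontrivial relations are `0 < x` for `x ∈ S¹`. -/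
def phiLE (x y : ℂ) : Prop := x = y ∨ x = 0

open scoped Classical

/-- The space of "raw" points of the topological order complex `Δ(Φⁿ)` of the mirrored
poset `Φⁿ` (mirror map `μ(x) = |supp x| ∈ {0, …, n}`): barycentric coordinates
`t : Fin (n+1) → ℝ` together with a choice `x k ∈ μ⁻¹(k)` for each level `k`, such that
`{x k : t k ≠ 0}` is a chain in the componentwise order on `Φⁿ`. -/
def RawDelta (n : ℕ) : Set ((Fin (n + 1) → ℝ) × (Fin (n + 1) → Fin n → ℂ)) :=
  {p | (∀ k, 0 ≤ p.1 k) ∧ (∑ k, p.1 k) = 1 ∧ (∀ k j, p.2 k j ∈ Phi) ∧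
    (∀ k, suppCard (p.2 k) = (k : ℕ)) ∧
    (∀ k l : Fin (n + 1), p.1 k ≠ 0 → p.1 l ≠ 0 → k ≤ l →
      ∀ j, phiLE (p.2 k j) (p.2 l j))}

/-- Two raw points represent the same point of `Δ(Φⁿ)` iff they have the same
barycentric coordinates and agree at all levels with nonzero coordinate. -/
def deltaRel (n : ℕ) (p q : ↥(RawDelta n)) : Prop :=
  p.1.1 = q.1.1 ∧ ∀ k, p.1.1 k ≠ 0 → p.1.2 k = q.1.2 k

/-- The `j`-th coordinate of the map `γ : Δ(Φⁿ) → (Δ(Φ))ⁿ`, with `Δ(Φ)` identified with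
the closed unit disk `𝔹 ⊂ ℂ` (the join point `(1−s)·0 + s·x` corresponding to `s x`):
if `ℓ = ℓ(z,j)` is the least level `k` with `t k ≠ 0` and `x k j ≠ 0`, the value is
`(∑_{k ≥ ℓ} t k) · (x ℓ j)`, and `0` if no such level exists. -/
def gammaCoord {n : ℕ} (t : Fin (n + 1) → ℝ) (x : Fin (n + 1) → Fin n → ℂ)
    (j : Fin n) : ℂ :=
  if h : (Finset.univ.filter (fun k : Fin (n + 1) => t k ≠ 0 ∧ x k j ≠ 0)).Nonempty then
    ((∑ k ∈ Finset.univ.filter (fun k : Fin (n + 1) =>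
        (Finset.univ.filter (fun k' : Fin (n + 1) => t k' ≠ 0 ∧ x k' j ≠ 0)).min' h ≤ k),
        t k : ℝ) : ℂ) *
      x ((Finset.univ.filter (fun k' : Fin (n + 1) => t k' ≠ 0 ∧ x k' j ≠ 0)).min' h) j
  else 0

namespace DPf

lemma mem_Phi_iff {z : ℂ} : z ∈ Phi ↔ ‖z‖ = 1 ∨ z = 0 := by
  constructor
  · rintro (h | h)
    · left; simpa [unitCircle] using h
    · right; simpa using h
  · rintro (h | h)
    · left; simpa [unitCircle] using h
    · right; simp [h, Phi]

lemma norm_eq_one_of_mem_Phi {z : ℂ} (h : z ∈ Phi) (hz : z ≠ 0) : ‖z‖ = 1 := by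
  rcases mem_Phi_iff.1 h with h | h
  · exact h
  · exact absurd h hz

lemma norm_le_one_of_mem_Phi {z : ℂ} (h : z ∈ Phi) : ‖z‖ ≤ 1 := by
  rcases mem_Phi_iff.1 h with h | h
  · exact le_of_eq h
  · simp [h]

variable {n : ℕ}

/-- `Tsum t m = ∑_{k ≥ m} t k`. -/
def Tsum (t : Fin (n + 1) → ℝ) (m : ℕ) : ℝ :=
  ∑ k ∈ Finset.univ.filter (fun k : Fin (n + 1) => m ≤ (k : ℕ)), t k

lemma Tsum_zero (t : Fin (n + 1) → ℝ) : Tsum t 0 = ∑ k, t k := by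
  simp [Tsum]

lemma Tsum_of_gt (t : Fin (n + 1) → ℝ) {m : ℕ} (hm : n < m) : Tsum t m = 0 := by
  rw [Tsum, Finset.sum_eq_zero]
  intro k hk
  simp only [Finset.mem_filter] at hk
  omega

lemma Tsum_succ (t : Fin (n + 1) → ℝ) {m : ℕ} (hm : m ≤ n) :
    Tsum t m = t ⟨m, by omega⟩ + Tsum t (m + 1) := by
  rw [Tsum, Tsum, show (Finset.univ.filter (fun k : Fin (n + 1) => m ≤ (k : ℕ))) =
      insert ⟨m, by omega⟩ (Finset.univ.filter (fun k : Fin (n + 1) => m + 1 ≤ (k : ℕ))) by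
    ext k
    simp only [Finset.mem_filter, Finset.mem_insert, Finset.mem_univ, true_and, Fin.ext_iff]
    omega]
  rw [Finset.sum_insert (by simp)]

lemma Tsum_nonneg {t : Fin (n + 1) → ℝ} (ht : ∀ k, 0 ≤ t k) (m : ℕ) : 0 ≤ Tsum t m :=
  Finset.sum_nonneg fun k _ => ht k

lemma Tsum_antitone {t : Fin (n + 1) → ℝ} (ht : ∀ k, 0 ≤ t k) {m m' : ℕ} (h : m ≤ m') :
    Tsum t m' ≤ Tsum t m := by
  apply Finset.sum_le_sum_of_subset_of_nonneg
  · intro k hk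
    simp only [Finset.mem_filter, Finset.mem_univ, true_and] at hk ⊢
    omega
  · exact fun k _ _ => ht k

lemma le_Tsum {t : Fin (n + 1) → ℝ} (ht : ∀ k, 0 ≤ t k) (k : Fin (n + 1)) :
    t k ≤ Tsum t (k : ℕ) := by
  apply Finset.single_le_sum (f := t) (fun i _ => ht i)
  simp

lemma Tsum_eq_of_zero {t : Fin (n + 1) → ℝ} {m m' : ℕ} (h : m ≤ m')
    (hz : ∀ k : Fin (n + 1), m ≤ (k : ℕ) → (k : ℕ) < m' → t k = 0) :
    Tsum t m = Tsum t m' := by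
  rw [Tsum, Tsum]
  apply (Finset.sum_subset _ _).symm
  · intro k hk
    simp only [Finset.mem_filter, Finset.mem_univ, true_and] at hk ⊢
    omega
  · intro k hk hk'
    simp only [Finset.mem_filter, Finset.mem_univ, true_and] at hk hk'
    exact hz k hk (by omega)

end DPf
namespace DPf

variable {n : ℕ}

/-- The set of levels at which `t` and `x · j` are nonzero. -/
def Flev (t : Fin (n + 1) → ℝ) (x : Fin (n + 1) → Fin n → ℂ) (j : Fin n) :
    Finset (Fin (n + 1)) :=
  Finset.univ.filter (fun k : Fin (n + 1) => t k ≠ 0 ∧ x k j ≠ 0)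

lemma mem_Flev {t : Fin (n + 1) → ℝ} {x : Fin (n + 1) → Fin n → ℂ} {j : Fin n}
    {k : Fin (n + 1)} : k ∈ Flev t x j ↔ t k ≠ 0 ∧ x k j ≠ 0 := by
  simp [Flev]

lemma Tsum_eq_fin (t : Fin (n + 1) → ℝ) (a : Fin (n + 1)) :
    Tsum t (a : ℕ) = ∑ k ∈ Finset.univ.filter (fun k : Fin (n + 1) => a ≤ k), t k := by
  rw [Tsum]
  apply Finset.sum_congr _ (fun _ _ => rfl)
  ext k
  simp only [Finset.mem_filter, Finset.mem_univ, true_and, Fin.le_def]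

lemma gamma_of_nonempty {t : Fin (n + 1) → ℝ} {x : Fin (n + 1) → Fin n → ℂ} {j : Fin n}
    (h : (Flev t x j).Nonempty) :
    gammaCoord t x j =
      ((Tsum t (((Flev t x j).min' h : Fin (n + 1)) : ℕ) : ℝ) : ℂ) *
        x ((Flev t x j).min' h) j := by
  have h' : (Finset.univ.filter (fun k : Fin (n + 1) => t k ≠ 0 ∧ x k j ≠ 0)).Nonempty := h
  rw [gammaCoord, dif_pos h', Tsum_eq_fin]
  rfl

lemma gamma_of_empty {t : Fin (n + 1) → ℝ} {x : Fin (n + 1) → Fin n → ℂ} {j : Fin n}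
    (h : ¬ (Flev t x j).Nonempty) : gammaCoord t x j = 0 := by
  have h' : ¬ (Finset.univ.filter (fun k : Fin (n + 1) => t k ≠ 0 ∧ x k j ≠ 0)).Nonempty := h
  rw [gammaCoord, dif_neg h']

section Raw

variable {t : Fin (n + 1) → ℝ} {x : Fin (n + 1) → Fin n → ℂ}

lemma nest (hc : ∀ k l : Fin (n + 1), t k ≠ 0 → t l ≠ 0 → k ≤ l →
      ∀ j, phiLE (x k j) (x l j))
    {k l : Fin (n + 1)} (hk : t k ≠ 0) (hl : t l ≠ 0) (hkl : k ≤ l) {j : Fin n}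
    (hxk : x k j ≠ 0) : x l j = x k j := by
  rcases hc k l hk hl hkl j with h | h
  · exact h.symm
  · exact absurd h hxk

lemma gamma_eq_sum
    (hc : ∀ k l : Fin (n + 1), t k ≠ 0 → t l ≠ 0 → k ≤ l →
      ∀ j, phiLE (x k j) (x l j)) (j : Fin n) :
    gammaCoord t x j = ∑ k, ((t k : ℝ) : ℂ) * x k j := by
  by_cases h : (Flev t x j).Nonempty
  · set ℓ := (Flev t x j).min' h with hℓ
    have hmem : t ℓ ≠ 0 ∧ x ℓ j ≠ 0 := mem_Flev.1 ((Flev t x j).min'_mem h)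
    have hsub : ∑ k, ((t k : ℝ) : ℂ) * x k j
        = ∑ k ∈ Finset.univ.filter (fun k : Fin (n + 1) => ℓ ≤ k), ((t k : ℝ) : ℂ) * x k j := by
      symm
      apply Finset.sum_subset (Finset.filter_subset _ _)
      intro k _ hk
      simp only [Finset.mem_filter, Finset.mem_univ, true_and, not_le] at hk
      by_cases htk : t k = 0
      · simp [htk]
      · have hxk : x k j = 0 := by
          by_contra hxk
          exact absurd ((Flev t x j).min'_le k (mem_Flev.2 ⟨htk, hxk⟩)) (not_le.2 hk)
        simp [hxk]
    rw [gamma_of_nonempty h, ← hℓ, Tsum_eq_fin, hsub]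
    push_cast [Finset.sum_mul]
    apply Finset.sum_congr rfl
    intro k hk
    simp only [Finset.mem_filter, Finset.mem_univ, true_and] at hk
    by_cases htk : t k = 0
    · simp [htk]
    · rw [nest hc hmem.1 htk hk hmem.2]
  · rw [gamma_of_empty h]
    symm
    apply Finset.sum_eq_zero
    intro k _
    by_cases htk : t k = 0
    · simp [htk]
    · have hxk : x k j = 0 := by
        by_contra hxk
        exact h ⟨k, mem_Flev.2 ⟨htk, hxk⟩⟩
      simp [hxk]

lemma norm_gamma_of_nonempty (ht0 : ∀ k, 0 ≤ t k)
    (hx : ∀ k j, x k j ∈ Phi) {j : Fin n} (h : (Flev t x j).Nonempty) :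
    ‖gammaCoord t x j‖ = Tsum t (((Flev t x j).min' h : Fin (n + 1)) : ℕ) := by
  have hmem : t ((Flev t x j).min' h) ≠ 0 ∧ x ((Flev t x j).min' h) j ≠ 0 :=
    mem_Flev.1 ((Flev t x j).min'_mem h)
  rw [gamma_of_nonempty h, norm_mul, norm_eq_one_of_mem_Phi (hx _ _) hmem.2, mul_one,
    Complex.norm_real, Real.norm_eq_abs, _root_.abs_of_nonneg (Tsum_nonneg ht0 _)]

lemma norm_gamma_le_one (ht0 : ∀ k, 0 ≤ t k) (ht1 : (∑ k, t k) = 1)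
    (hx : ∀ k j, x k j ∈ Phi) (j : Fin n) : ‖gammaCoord t x j‖ ≤ 1 := by
  by_cases h : (Flev t x j).Nonempty
  · rw [norm_gamma_of_nonempty ht0 hx h]
    calc Tsum t _ ≤ Tsum t 0 := Tsum_antitone ht0 (Nat.zero_le _)
    _ = 1 := by rw [Tsum_zero, ht1]
  · simp [gamma_of_empty h]

end Raw
end DPf
namespace DPf

variable {n : ℕ}

/-- Strict "descending norm, then index" order on coordinates. -/
def keyLT (w : Fin n → ℂ) (i j : Fin n) : Prop :=
  ‖w j‖ < ‖w i‖ ∨ (‖w i‖ = ‖w j‖ ∧ i < j)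

lemma keyLT_irrefl (w : Fin n → ℂ) (j : Fin n) : ¬ keyLT w j j := by
  rintro (h | ⟨_, h⟩) <;> exact absurd h (by simp)

lemma keyLT_trans {w : Fin n → ℂ} {i j k : Fin n} (h1 : keyLT w i j) (h2 : keyLT w j k) :
    keyLT w i k := by
  rcases h1 with h1 | ⟨h1, h1'⟩ <;> rcases h2 with h2 | ⟨h2, h2'⟩
  · exact Or.inl (h2.trans h1)
  · exact Or.inl (h2 ▸ h1)
  · exact Or.inl (h1 ▸ h2)
  · exact Or.inr ⟨h1.trans h2, h1'.trans h2'⟩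

lemma keyLT_trichotomy (w : Fin n → ℂ) {i j : Fin n} (hij : i ≠ j) :
    keyLT w i j ∨ keyLT w j i := by
  rcases lt_trichotomy ‖w i‖ ‖w j‖ with h | h | h
  · exact Or.inr (Or.inl h)
  · rcases lt_or_gt_of_ne (fun hh : i = j => hij hh) with hlt | hgt
    · exact Or.inl (Or.inr ⟨h, hlt⟩)
    · exact Or.inr (Or.inr ⟨h.symm, hgt⟩)
  · exact Or.inl (Or.inl h)

/-- Position of `j` in the descending order of the norms (ties broken by index). -/
def rank (w : Fin n → ℂ) (j : Fin n) : ℕ :=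
  (Finset.univ.filter (fun i => keyLT w i j)).card

lemma rank_lt_rank {w : Fin n → ℂ} {i j : Fin n} (h : keyLT w i j) :
    rank w i < rank w j := by
  apply Finset.card_lt_card
  constructor
  · intro a ha
    simp only [Finset.mem_filter, Finset.mem_univ, true_and] at ha ⊢
    exact keyLT_trans ha h
  · intro hsub
    have := hsub (Finset.mem_filter.2 ⟨Finset.mem_univ i, h⟩)
    simp only [Finset.mem_filter, Finset.mem_univ, true_and] at this
    exact keyLT_irrefl w i this

lemma rank_lt_n (w : Fin n → ℂ) (j : Fin n) : rank w j < n := by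
  have : (Finset.univ.filter (fun i => keyLT w i j)) ⊂ Finset.univ := by
    apply Finset.filter_ssubset.2
    exact ⟨j, Finset.mem_univ j, keyLT_irrefl w j⟩
  simpa [rank] using Finset.card_lt_card this

lemma rank_injective (w : Fin n → ℂ) : Function.Injective (rank w) := by
  intro i j hij
  by_contra hne
  rcases keyLT_trichotomy w hne with h | h
  · exact absurd hij (Nat.ne_of_lt (rank_lt_rank h))
  · exact absurd hij.symm (Nat.ne_of_lt (rank_lt_rank h))

lemma norm_le_of_rank_le {w : Fin n → ℂ} {i j : Fin n} (h : rank w i ≤ rank w j) :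
    ‖w j‖ ≤ ‖w i‖ := by
  by_contra hn
  exact absurd h (not_le.2 (rank_lt_rank (Or.inl (not_le.1 hn))))

/-- `rank` as an equivalence `Fin n ≃ Fin n`. -/
def rankE (w : Fin n → ℂ) : Fin n ≃ Fin n :=
  Equiv.ofBijective (fun j => ⟨rank w j, rank_lt_n w j⟩)
    (Finite.injective_iff_bijective.1 (fun i j hij => rank_injective w (by
      simpa [Fin.ext_iff] using hij)))

lemma rankE_apply (w : Fin n → ℂ) (j : Fin n) : ((rankE w j : Fin n) : ℕ) = rank w j := rfl

/-- The sorted (descending) sequence of norms, with `vval 0 = 1` and `vval m = 0` for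
`m > n`. -/
def vval (w : Fin n → ℂ) (m : ℕ) : ℝ :=
  if h : 1 ≤ m ∧ m ≤ n then ‖w ((rankE w).symm ⟨m - 1, by omega⟩)‖
  else if m = 0 then 1 else 0

lemma vval_zero (w : Fin n → ℂ) : vval w 0 = 1 := by simp [vval]

lemma vval_of_gt {w : Fin n → ℂ} {m : ℕ} (h : n < m) : vval w m = 0 := by
  rw [vval, dif_neg (by omega), if_neg (by omega)]

lemma vval_rank_succ (w : Fin n → ℂ) (j : Fin n) : vval w (rank w j + 1) = ‖w j‖ := by
  have h1 : 1 ≤ rank w j + 1 ∧ rank w j + 1 ≤ n := ⟨by omega, rank_lt_n w j⟩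
  rw [vval, dif_pos h1]
  congr 1
  have : (⟨rank w j + 1 - 1, by omega⟩ : Fin n) = rankE w j := by
    simp [Fin.ext_iff, rankE_apply]
  rw [this, Equiv.symm_apply_apply]

lemma vval_nonneg (w : Fin n → ℂ) (m : ℕ) : 0 ≤ vval w m := by
  rw [vval]
  split
  · exact norm_nonneg _
  · split <;> norm_num

lemma vval_le_one {w : Fin n → ℂ} (hw : ∀ j, ‖w j‖ ≤ 1) (m : ℕ) : vval w m ≤ 1 := by
  rw [vval]
  split
  · exact hw _
  · split <;> norm_num

lemma vval_succ_le {w : Fin n → ℂ} (hw : ∀ j, ‖w j‖ ≤ 1) (m : ℕ) :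
    vval w (m + 1) ≤ vval w m := by
  rcases Nat.eq_zero_or_pos m with rfl | hm
  · rw [vval_zero]; exact vval_le_one hw 1
  by_cases hmn : m + 1 ≤ n
  · have h1 : 1 ≤ m ∧ m ≤ n := ⟨hm, by omega⟩
    have h2 : 1 ≤ m + 1 ∧ m + 1 ≤ n := ⟨by omega, hmn⟩
    rw [vval, dif_pos h2, vval, dif_pos h1]
    apply norm_le_of_rank_le
    have r1 : rank w ((rankE w).symm ⟨m - 1, by omega⟩) = m - 1 := by
      conv_lhs => rw [← rankE_apply, Equiv.apply_symm_apply]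
    have r2 : rank w ((rankE w).symm ⟨m + 1 - 1, by omega⟩) = m := by
      conv_lhs => rw [← rankE_apply, Equiv.apply_symm_apply]
      simp
    omega
  · rw [vval_of_gt (by omega)]
    exact vval_nonneg w m

lemma vval_antitone {w : Fin n → ℂ} (hw : ∀ j, ‖w j‖ ≤ 1) {m m' : ℕ} (h : m ≤ m') :
    vval w m' ≤ vval w m := by
  induction m' with
  | zero => simpa [Nat.le_zero.1 h]
  | succ k ih =>
    rcases Nat.lt_or_ge m (k + 1) with h' | h'
    · exact (vval_succ_le hw k).trans (ih (by omega))
    · have : m = k + 1 := by omega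
      simp [this]

/-- The barycentric coordinates of the inverse point. -/
def tov (w : Fin n → ℂ) : Fin (n + 1) → ℝ := fun k => vval w (k : ℕ) - vval w ((k : ℕ) + 1)

lemma tov_apply (w : Fin n → ℂ) (k : Fin (n + 1)) :
    tov w k = vval w (k : ℕ) - vval w ((k : ℕ) + 1) := rfl

/-- The phase of `w j` (an arbitrary point of `S¹` if `w j = 0`). -/
def phase (w : Fin n → ℂ) (j : Fin n) : ℂ :=
  if w j = 0 then 1 else ((‖w j‖⁻¹ : ℝ) : ℂ) * w j

lemma norm_phase (w : Fin n → ℂ) (j : Fin n) : ‖phase w j‖ = 1 := by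
  rw [phase]
  split
  · simp
  · rename_i hj
    rw [norm_mul, Complex.norm_real, Real.norm_eq_abs,
      _root_.abs_of_nonneg (by positivity), inv_mul_cancel₀ (by simpa using hj)]

lemma phase_ne_zero (w : Fin n → ℂ) (j : Fin n) : phase w j ≠ 0 := by
  intro h
  have := norm_phase w j
  rw [h] at this
  simp at this

lemma phase_mem_Phi (w : Fin n → ℂ) (j : Fin n) : phase w j ∈ Phi :=
  mem_Phi_iff.2 (Or.inl (norm_phase w j))

lemma norm_smul_phase (w : Fin n → ℂ) (j : Fin n) : ((‖w j‖ : ℝ) : ℂ) * phase w j = w j := by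
  rw [phase]
  split
  · rename_i h; simp [h]
  · rename_i h
    rw [← mul_assoc, ← Complex.ofReal_mul, mul_inv_cancel₀ (by simpa using h)]
    simp

/-- The chain of the inverse point. -/
def xof (w : Fin n → ℂ) (k : Fin (n + 1)) (j : Fin n) : ℂ :=
  if rank w j < (k : ℕ) then phase w j else 0

lemma xof_apply (w : Fin n → ℂ) (k : Fin (n + 1)) (j : Fin n) :
    xof w k j = if rank w j < (k : ℕ) then phase w j else 0 := rfl

lemma Tsum_tov (w : Fin n → ℂ) (m : ℕ) : Tsum (tov w) m = vval w m := by
  have key : ∀ d m, n + 1 ≤ m + d → Tsum (tov w) m = vval w m := by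
    intro d
    induction d with
    | zero =>
      intro m hm
      rw [Tsum_of_gt _ (by omega), vval_of_gt (by omega)]
    | succ d ih =>
      intro m hm
      by_cases h : n + 1 ≤ m
      · rw [Tsum_of_gt _ (by omega), vval_of_gt (by omega)]
      · rw [Tsum_succ _ (by omega), ih (m + 1) (by omega)]
        show tov w ⟨m, by omega⟩ + vval w (m + 1) = vval w m
        rw [tov]
        show vval w m - vval w (m + 1) + vval w (m + 1) = vval w m
        ring
  exact key (n + 1) m (by omega)

lemma card_filter_lt (c : ℕ) (hc : c ≤ n) :
    (Finset.univ.filter (fun m : Fin n => (m : ℕ) < c)).card = c := by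
  apply Finset.card_eq_of_bijective (fun i hi => ⟨i, by omega⟩)
  · intro m hm
    simp only [Finset.mem_filter, Finset.mem_univ, true_and] at hm
    exact ⟨(m : ℕ), hm, by simp⟩
  · intro i hi
    simp only [Finset.mem_filter, Finset.mem_univ, true_and]
    exact hi
  · intro i j hi hj hij
    simpa [Fin.ext_iff] using hij

lemma suppCard_xof (w : Fin n → ℂ) (k : Fin (n + 1)) : suppCard (xof w k) = (k : ℕ) := by
  rw [suppCard]
  have h1 : (Finset.univ.filter (fun j => xof w k j ≠ 0)) =
      Finset.univ.filter (fun j => rank w j < (k : ℕ)) := by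
    ext j
    simp only [Finset.mem_filter, Finset.mem_univ, true_and]
    rw [xof_apply]
    split
    · rename_i h; simp [phase_ne_zero w j, h]
    · rename_i h; simp [h]
  rw [h1]
  have h2 : (Finset.univ.filter (fun j => rank w j < (k : ℕ))) =
      Finset.univ.filter (fun j => ((rankE w j : Fin n) : ℕ) < (k : ℕ)) := by
    exact Finset.filter_congr (fun j _ => Iff.rfl)
  have h3 : (Finset.univ.filter (fun j => ((rankE w j : Fin n) : ℕ) < (k : ℕ))).card =
      (Finset.univ.filter (fun m : Fin n => (m : ℕ) < (k : ℕ))).card := by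
    apply Finset.card_bij (fun j _ => rankE w j)
    · intro a ha
      simp only [Finset.mem_filter, Finset.mem_univ, true_and] at ha ⊢
      exact ha
    · intro a _ b _ hab
      exact (rankE w).injective hab
    · intro b hb
      simp only [Finset.mem_filter, Finset.mem_univ, true_and] at hb
      refine ⟨(rankE w).symm b, ?_, by simp⟩
      simp only [Finset.mem_filter, Finset.mem_univ, true_and, Equiv.apply_symm_apply]
      exact hb
  rw [h2, h3, card_filter_lt (c := (k : ℕ)) (Fin.is_le k)]

lemma Finv_mem {w : Fin n → ℂ} (hw : ∀ j, ‖w j‖ ≤ 1) :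
    ((tov w, xof w) : (Fin (n + 1) → ℝ) × (Fin (n + 1) → Fin n → ℂ)) ∈ RawDelta n := by
  refine ⟨?_, ?_, ?_, ?_, ?_⟩
  · intro k
    have := vval_succ_le hw (k : ℕ)
    show 0 ≤ tov w k
    rw [tov_apply]
    linarith
  · rw [← Tsum_zero, Tsum_tov, vval_zero]
  · intro k j
    show xof w k j ∈ Phi
    rw [xof_apply]
    split
    · exact phase_mem_Phi w j
    · exact Or.inr rfl
  · exact suppCard_xof w
  · intro k l _ _ hkl j
    show phiLE (xof w k j) (xof w l j)
    rw [xof_apply, xof_apply]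
    split
    · rename_i h
      rw [if_pos (lt_of_lt_of_le h hkl)]
      exact Or.inl rfl
    · exact Or.inr rfl

lemma sum_tov_xof {w : Fin n → ℂ} (j : Fin n) :
    ∑ k, ((tov w k : ℝ) : ℂ) * xof w k j = w j := by
  have step1 : ∀ k : Fin (n + 1), ((tov w k : ℝ) : ℂ) * xof w k j =
      if rank w j + 1 ≤ (k : ℕ) then ((tov w k : ℝ) : ℂ) * phase w j else 0 := by
    intro k
    rw [xof_apply]
    by_cases h : rank w j < (k : ℕ)
    · rw [if_pos h, if_pos (by omega)]
    · rw [if_neg h, if_neg (by omega), mul_zero]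
  calc ∑ k, ((tov w k : ℝ) : ℂ) * xof w k j
      = ∑ k : Fin (n + 1), if rank w j + 1 ≤ (k : ℕ) then ((tov w k : ℝ) : ℂ) * phase w j else 0 :=
        Finset.sum_congr rfl (fun k _ => step1 k)
    _ = ∑ k ∈ Finset.univ.filter (fun k : Fin (n + 1) => rank w j + 1 ≤ (k : ℕ)),
          ((tov w k : ℝ) : ℂ) * phase w j := (Finset.sum_filter _ _).symm
    _ = ((Tsum (tov w) (rank w j + 1) : ℝ) : ℂ) * phase w j := by
        rw [Tsum]
        push_cast [Finset.sum_mul]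
        rfl
    _ = w j := by rw [Tsum_tov, vval_rank_succ, norm_smul_phase]

end DPf
namespace DPf

variable {n : ℕ}

lemma exists_level {t : Fin (n + 1) → ℝ} {m : ℕ} (hT : Tsum t m ≠ 0) :
    ∃ k : Fin (n + 1), m ≤ (k : ℕ) ∧ t k ≠ 0 := by
  rw [Tsum] at hT
  obtain ⟨k, hk, hk'⟩ := Finset.exists_ne_zero_of_sum_ne_zero hT
  simp only [Finset.mem_filter, Finset.mem_univ, true_and] at hk
  exact ⟨k, hk, hk'⟩

lemma card_rank_lt (w : Fin n → ℂ) {c : ℕ} (hc : c ≤ n) :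
    (Finset.univ.filter (fun j : Fin n => rank w j < c)).card = c := by
  have h2 : (Finset.univ.filter (fun j : Fin n => rank w j < c)) =
      Finset.univ.filter (fun j => ((rankE w j : Fin n) : ℕ) < c) := by
    exact Finset.filter_congr (fun j _ => Iff.rfl)
  have h3 : (Finset.univ.filter (fun j => ((rankE w j : Fin n) : ℕ) < c)).card =
      (Finset.univ.filter (fun m : Fin n => (m : ℕ) < c)).card := by
    apply Finset.card_bij (fun j _ => rankE w j)
    · intro a ha
      simp only [Finset.mem_filter, Finset.mem_univ, true_and] at ha ⊢
      exact ha
    · intro a _ b _ hab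
      exact (rankE w).injective hab
    · intro b hb
      simp only [Finset.mem_filter, Finset.mem_univ, true_and] at hb
      refine ⟨(rankE w).symm b, ?_, by simp⟩
      simp only [Finset.mem_filter, Finset.mem_univ, true_and, Equiv.apply_symm_apply]
      exact hb
  rw [h2, h3, card_filter_lt c hc]

section Reconstruct

variable {t : Fin (n + 1) → ℝ} {x : Fin (n + 1) → Fin n → ℂ}

lemma claimA (ht0 : ∀ k, 0 ≤ t k) (hx : ∀ k j, x k j ∈ Phi)
    (hs : ∀ k, suppCard (x k) = (k : ℕ))
    {m : ℕ} (hmn : m ≤ n) :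
    m ≤ (Finset.univ.filter
      (fun j : Fin n => Tsum t m ≤ ‖gammaCoord t x j‖)).card := by
  by_cases hT : Tsum t m = 0
  · have heq : Finset.univ.filter (fun j : Fin n => Tsum t m ≤ ‖gammaCoord t x j‖)
        = Finset.univ :=
      Finset.filter_true_of_mem (fun j _ => hT ▸ norm_nonneg _)
    rw [heq]
    simpa using hmn
  · have hK' : (Finset.univ.filter
        (fun k : Fin (n + 1) => m ≤ (k : ℕ) ∧ t k ≠ 0)).Nonempty := by
      obtain ⟨k, hk1, hk2⟩ := exists_level hT
      exact ⟨k, by simp [hk1, hk2]⟩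
    set k₀ := (Finset.univ.filter
        (fun k : Fin (n + 1) => m ≤ (k : ℕ) ∧ t k ≠ 0)).min' hK' with hk₀def
    have hk₀ : m ≤ (k₀ : ℕ) ∧ t k₀ ≠ 0 := by
      have := Finset.min'_mem _ hK'
      simpa using this
    have hTk : Tsum t m = Tsum t (k₀ : ℕ) := by
      apply Tsum_eq_of_zero hk₀.1
      intro k h1 h2
      by_contra htk
      have hk : k ∈ Finset.univ.filter (fun k : Fin (n + 1) => m ≤ (k : ℕ) ∧ t k ≠ 0) := by
        simp [h1, htk]
      have := Finset.min'_le _ k hk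
      rw [← hk₀def] at this
      exact absurd h2 (by simpa using not_lt.2 ((Fin.le_def.1 this)))
    have hsub : (Finset.univ.filter (fun j => x k₀ j ≠ 0)) ⊆
        Finset.univ.filter (fun j : Fin n => Tsum t m ≤ ‖gammaCoord t x j‖) := by
      intro j hj
      simp only [Finset.mem_filter, Finset.mem_univ, true_and] at hj ⊢
      have hne : (Flev t x j).Nonempty := ⟨k₀, mem_Flev.2 ⟨hk₀.2, hj⟩⟩
      have hl : (Flev t x j).min' hne ≤ k₀ :=
        Finset.min'_le _ k₀ (mem_Flev.2 ⟨hk₀.2, hj⟩)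
      rw [norm_gamma_of_nonempty ht0 hx hne]
      calc Tsum t m = Tsum t (k₀ : ℕ) := hTk
        _ ≤ Tsum t (((Flev t x j).min' hne : Fin (n + 1)) : ℕ) :=
          Tsum_antitone ht0 (Fin.le_def.1 hl)
    calc m ≤ (k₀ : ℕ) := hk₀.1
      _ = suppCard (x k₀) := (hs k₀).symm
      _ ≤ _ := Finset.card_le_card hsub

lemma claimB (ht0 : ∀ k, 0 ≤ t k) (hx : ∀ k j, x k j ∈ Phi)
    (hs : ∀ k, suppCard (x k) = (k : ℕ))
    (hc : ∀ k l : Fin (n + 1), t k ≠ 0 → t l ≠ 0 → k ≤ l → ∀ j, phiLE (x k j) (x l j))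
    {m : ℕ} (hm1 : 1 ≤ m) :
    (Finset.univ.filter
      (fun j : Fin n => Tsum t m < ‖gammaCoord t x j‖)).card ≤ m - 1 := by
  by_cases hK : (Finset.univ.filter
      (fun k : Fin (n + 1) => (k : ℕ) < m ∧ t k ≠ 0)).Nonempty
  · set k₁ := (Finset.univ.filter
        (fun k : Fin (n + 1) => (k : ℕ) < m ∧ t k ≠ 0)).max' hK with hk₁def
    have hk₁ : (k₁ : ℕ) < m ∧ t k₁ ≠ 0 := by
      have := Finset.max'_mem _ hK
      simpa using this
    have hsub : Finset.univ.filter (fun j : Fin n => Tsum t m < ‖gammaCoord t x j‖) ⊆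
        Finset.univ.filter (fun j => x k₁ j ≠ 0) := by
      intro j hj
      simp only [Finset.mem_filter, Finset.mem_univ, true_and] at hj ⊢
      by_cases hne : (Flev t x j).Nonempty
      · set ℓ := (Flev t x j).min' hne with hℓdef
        have hℓ : t ℓ ≠ 0 ∧ x ℓ j ≠ 0 := mem_Flev.1 (Finset.min'_mem _ hne)
        rw [norm_gamma_of_nonempty ht0 hx hne, ← hℓdef] at hj
        have hlm : (ℓ : ℕ) < m := by
          by_contra hge
          exact absurd hj (not_lt.2 (Tsum_antitone ht0 (not_lt.1 hge)))
        have hmem : ℓ ∈ Finset.univ.filter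
            (fun k : Fin (n + 1) => (k : ℕ) < m ∧ t k ≠ 0) := by
          simp [hlm, hℓ.1]
        have hle : ℓ ≤ k₁ := Finset.le_max' _ ℓ hmem
        rw [nest hc hℓ.1 hk₁.2 hle hℓ.2]
        exact hℓ.2
      · rw [gamma_of_empty hne] at hj
        simp only [norm_zero] at hj
        exact absurd hj (not_lt.2 (Tsum_nonneg ht0 m))
    calc (Finset.univ.filter (fun j : Fin n => Tsum t m < ‖gammaCoord t x j‖)).card
        ≤ (Finset.univ.filter (fun j => x k₁ j ≠ 0)).card := Finset.card_le_card hsub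
      _ = (k₁ : ℕ) := hs k₁
      _ ≤ m - 1 := by omega
  · have heq : Finset.univ.filter (fun j : Fin n => Tsum t m < ‖gammaCoord t x j‖) = ∅ := by
      rw [Finset.filter_eq_empty_iff]
      intro j _
      by_cases hne : (Flev t x j).Nonempty
      · set ℓ := (Flev t x j).min' hne with hℓdef
        have hℓ : t ℓ ≠ 0 ∧ x ℓ j ≠ 0 := mem_Flev.1 (Finset.min'_mem _ hne)
        rw [norm_gamma_of_nonempty ht0 hx hne, ← hℓdef]
        by_cases hlm : (ℓ : ℕ) < m
        · exact absurd ⟨ℓ, by simp [hlm, hℓ.1]⟩ hK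
        · exact not_lt.2 (Tsum_antitone ht0 (not_lt.1 hlm))
      · rw [gamma_of_empty hne]
        simpa using Tsum_nonneg ht0 m
    rw [heq]
    simp

/-- The sorted norms of `γ(p)` recover the tail sums of the barycentric coordinates. -/
lemma vval_eq_Tsum (ht0 : ∀ k, 0 ≤ t k) (ht1 : (∑ k, t k) = 1)
    (hx : ∀ k j, x k j ∈ Phi)
    (hs : ∀ k, suppCard (x k) = (k : ℕ))
    (hc : ∀ k l : Fin (n + 1), t k ≠ 0 → t l ≠ 0 → k ≤ l → ∀ j, phiLE (x k j) (x l j))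
    (m : ℕ) : vval (fun j => gammaCoord t x j) m = Tsum t m := by
  set w : Fin n → ℂ := fun j => gammaCoord t x j with hw
  rcases Nat.eq_zero_or_pos m with rfl | hm1
  · rw [vval_zero, Tsum_zero, ht1]
  by_cases hmn : m ≤ n
  swap
  · rw [vval_of_gt (by omega), Tsum_of_gt t (by omega)]
  -- main case 1 ≤ m ≤ n
  have h12 : 1 ≤ m ∧ m ≤ n := ⟨hm1, hmn⟩
  rw [vval, dif_pos h12]
  set j₀ := (rankE w).symm ⟨m - 1, by omega⟩ with hj₀
  have hrank : rank w j₀ = m - 1 := by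
    conv_lhs => rw [← rankE_apply, hj₀, Equiv.apply_symm_apply]
  apply le_antisymm
  · -- ‖w j₀‖ ≤ Tsum t m
    by_contra hgt
    push_neg at hgt
    have hsub : Finset.univ.filter (fun i : Fin n => rank w i < m) ⊆
        Finset.univ.filter (fun i : Fin n => Tsum t m < ‖gammaCoord t x i‖) := by
      intro i hi
      simp only [Finset.mem_filter, Finset.mem_univ, true_and] at hi ⊢
      have : rank w i ≤ rank w j₀ := by omega
      exact lt_of_lt_of_le hgt (norm_le_of_rank_le this)
    have := Finset.card_le_card hsub
    rw [card_rank_lt w hmn] at this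
    have := this.trans (claimB ht0 hx hs hc hm1)
    omega
  · -- Tsum t m ≤ ‖w j₀‖
    by_contra hlt
    push_neg at hlt
    have hsub : Finset.univ.filter (fun i : Fin n => Tsum t m ≤ ‖gammaCoord t x i‖) ⊆
        Finset.univ.filter (fun i : Fin n => keyLT w i j₀) := by
      intro i hi
      simp only [Finset.mem_filter, Finset.mem_univ, true_and] at hi ⊢
      exact Or.inl (lt_of_lt_of_le hlt hi)
    have h1 := (claimA ht0 hx hs hmn).trans (Finset.card_le_card hsub)
    have h2 : (Finset.univ.filter (fun i : Fin n => keyLT w i j₀)).card = m - 1 := hrank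
    omega

/-- Reconstruction of the barycentric coordinates. -/
lemma tov_gamma_eq (ht0 : ∀ k, 0 ≤ t k) (ht1 : (∑ k, t k) = 1)
    (hx : ∀ k j, x k j ∈ Phi)
    (hs : ∀ k, suppCard (x k) = (k : ℕ))
    (hc : ∀ k l : Fin (n + 1), t k ≠ 0 → t l ≠ 0 → k ≤ l → ∀ j, phiLE (x k j) (x l j)) :
    tov (fun j => gammaCoord t x j) = t := by
  funext k
  rw [tov_apply, vval_eq_Tsum ht0 ht1 hx hs hc, vval_eq_Tsum ht0 ht1 hx hs hc,
    Tsum_succ t (Fin.is_le k)]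
  have : (⟨(k : ℕ), by omega⟩ : Fin (n + 1)) = k := by simp [Fin.ext_iff]
  rw [this]
  ring

/-- Reconstruction of the chains at levels with nonzero barycentric coordinate. -/
lemma xof_gamma_eq (ht0 : ∀ k, 0 ≤ t k) (ht1 : (∑ k, t k) = 1)
    (hx : ∀ k j, x k j ∈ Phi)
    (hs : ∀ k, suppCard (x k) = (k : ℕ))
    (hc : ∀ k l : Fin (n + 1), t k ≠ 0 → t l ≠ 0 → k ≤ l → ∀ j, phiLE (x k j) (x l j))
    {k : Fin (n + 1)} (htk : t k ≠ 0) :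
    xof (fun j => gammaCoord t x j) k = x k := by
  set w : Fin n → ℂ := fun j => gammaCoord t x j with hw
  have htkpos : 0 < t k := lt_of_le_of_ne (ht0 k) (Ne.symm htk)
  have hTkpos : 0 < Tsum t (k : ℕ) := lt_of_lt_of_le htkpos (le_Tsum ht0 k)
  -- norms: in-support coordinates are ≥ Tsum k, out-of-support ones are < Tsum k
  have hin : ∀ j, x k j ≠ 0 → Tsum t (k : ℕ) ≤ ‖w j‖ ∧ phase w j = x k j := by
    intro j hj
    have hne : (Flev t x j).Nonempty := ⟨k, mem_Flev.2 ⟨htk, hj⟩⟩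
    set ℓ := (Flev t x j).min' hne with hℓdef
    have hℓ : t ℓ ≠ 0 ∧ x ℓ j ≠ 0 := mem_Flev.1 (Finset.min'_mem _ hne)
    have hlk : ℓ ≤ k := Finset.min'_le _ k (mem_Flev.2 ⟨htk, hj⟩)
    have hnorm : ‖w j‖ = Tsum t (ℓ : ℕ) := by
      rw [hw]; exact norm_gamma_of_nonempty ht0 hx hne
    have h1 : Tsum t (k : ℕ) ≤ ‖w j‖ := by
      rw [hnorm]; exact Tsum_antitone ht0 (Fin.le_def.1 hlk)
    refine ⟨h1, ?_⟩
    have hxkℓ : x k j = x ℓ j := nest hc hℓ.1 htk hlk hℓ.2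
    have hwj : w j = ((‖w j‖ : ℝ) : ℂ) * x k j := by
      rw [hnorm, hxkℓ, hw]
      exact gamma_of_nonempty hne
    have hwne : ((‖w j‖ : ℝ) : ℂ) ≠ 0 := by
      simp only [ne_eq, Complex.ofReal_eq_zero]
      exact ne_of_gt (lt_of_lt_of_le hTkpos h1)
    apply mul_left_cancel₀ hwne
    rw [norm_smul_phase]
    exact hwj
  have hout : ∀ j, x k j = 0 → ‖w j‖ < Tsum t (k : ℕ) := by
    intro j hj
    by_cases hne : (Flev t x j).Nonempty
    · set ℓ := (Flev t x j).min' hne with hℓdef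
      have hℓ : t ℓ ≠ 0 ∧ x ℓ j ≠ 0 := mem_Flev.1 (Finset.min'_mem _ hne)
      have hkl : ¬ ℓ ≤ k := by
        intro hle
        exact hℓ.2 ((nest hc hℓ.1 htk hle hℓ.2).symm.trans hj)
      have hnorm : ‖w j‖ = Tsum t (ℓ : ℕ) := by
        rw [hw]; exact norm_gamma_of_nonempty ht0 hx hne
      have hsucc : (k : ℕ) + 1 ≤ (ℓ : ℕ) := by
        have := Fin.lt_def.1 (not_le.1 hkl)
        omega
      calc ‖w j‖ = Tsum t (ℓ : ℕ) := hnorm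
        _ ≤ Tsum t ((k : ℕ) + 1) := Tsum_antitone ht0 hsucc
        _ < Tsum t (k : ℕ) := by
          rw [Tsum_succ t (Fin.is_le k)]
          have : (⟨(k : ℕ), by omega⟩ : Fin (n + 1)) = k := by simp [Fin.ext_iff]
          rw [this]
          linarith
    · have h0 : w j = 0 := gamma_of_empty hne
      rw [h0]
      simpa using hTkpos
  -- supp(x k) = {j : rank w j < k}
  have hsupp : ∀ j, (rank w j < (k : ℕ) ↔ x k j ≠ 0) := by
    intro j
    constructor
    · intro hlt
      by_contra hj
      -- j out of support: every i in the support precedes j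
      have hsub : Finset.univ.filter (fun i => x k i ≠ 0) ⊆
          Finset.univ.filter (fun i => keyLT w i j) := by
        intro i hi
        simp only [Finset.mem_filter, Finset.mem_univ, true_and] at hi ⊢
        exact Or.inl (lt_of_lt_of_le (hout j hj) (hin i hi).1)
      have h := Finset.card_le_card hsub
      have h' : suppCard (x k) ≤ rank w j := h
      rw [hs k] at h'
      omega
    · intro hj
      -- predecessors of j are contained in supp \ {j}
      have hsub : Finset.univ.filter (fun i => keyLT w i j) ⊆
          (Finset.univ.filter (fun i => x k i ≠ 0)).erase j := by
        intro i hi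
        simp only [Finset.mem_filter, Finset.mem_univ, true_and] at hi
        rw [Finset.mem_erase]
        constructor
        · intro hij
          exact keyLT_irrefl w j (hij ▸ hi)
        simp only [Finset.mem_filter, Finset.mem_univ, true_and]
        by_contra hxi
        have h1 : ‖w i‖ < Tsum t (k : ℕ) := hout i hxi
        have h2 : Tsum t (k : ℕ) ≤ ‖w j‖ := (hin j hj).1
        rcases hi with hlt | ⟨heq, _⟩
        · linarith
        · linarith
      have hcard := Finset.card_le_card hsub
      have herase : ((Finset.univ.filter (fun i => x k i ≠ 0)).erase j).card =
          (k : ℕ) - 1 := by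
        rw [Finset.card_erase_of_mem (by simp [hj])]
        have h' : (Finset.univ.filter (fun i => x k i ≠ 0)).card = (k : ℕ) := hs k
        rw [h']
      have hkpos : 0 < (k : ℕ) := by
        have hpos : 0 < (Finset.univ.filter (fun i => x k i ≠ 0)).card :=
          Finset.card_pos.2 ⟨j, by simp [hj]⟩
        have h' : (Finset.univ.filter (fun i => x k i ≠ 0)).card = (k : ℕ) := hs k
        omega
      have hfin : rank w j ≤ (k : ℕ) - 1 := by
        rw [herase] at hcard
        exact hcard
      omega
  funext j
  rw [xof_apply]
  by_cases hlt : rank w j < (k : ℕ)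
  · rw [if_pos hlt, (hin j ((hsupp j).1 hlt)).2]
  · rw [if_neg hlt]
    by_contra hxj
    exact hlt ((hsupp j).2 (fun h => hxj h.symm))

end Reconstruct
end DPf
namespace DPf

variable {n : ℕ}

abbrev PSpace (n : ℕ) := (Fin (n + 1) → ℝ) × (Fin (n + 1) → Fin n → ℂ)

lemma cont_eval1 (k : Fin (n + 1)) : Continuous (fun p : PSpace n => p.1 k) :=
  (continuous_apply k).comp continuous_fst

lemma cont_eval2 (k : Fin (n + 1)) (j : Fin n) :
    Continuous (fun p : PSpace n => p.2 k j) :=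
  (continuous_apply j).comp ((continuous_apply k).comp continuous_snd)

lemma isClosed_unitCircle : IsClosed unitCircle := Metric.isClosed_sphere

lemma RawDelta_eq :
    RawDelta n =
      ({p : PSpace n | ∀ k, 0 ≤ p.1 k} ∩ {p : PSpace n | (∑ k, p.1 k) = 1}) ∩
      ((⋂ k : Fin (n + 1), ⋃ S : Finset (Fin n),
        {p : PSpace n | S.card = (k : ℕ) ∧
          ∀ j, (j ∈ S → p.2 k j ∈ unitCircle) ∧ (j ∉ S → p.2 k j = 0)}) ∩
      (⋂ k : Fin (n + 1), ⋂ l : Fin (n + 1),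
        {p : PSpace n | k ≤ l → (p.1 k = 0 ∨ p.1 l = 0 ∨
          ∀ j, (p.2 k j = p.2 l j ∨ p.2 k j = 0))})) := by
  ext p
  simp only [RawDelta, mem_inter_iff, mem_setOf_eq, mem_iInter, mem_iUnion]
  constructor
  · rintro ⟨h1, h2, h3, h4, h5⟩
    refine ⟨⟨h1, h2⟩, fun k => ?_, fun k l hkl => ?_⟩
    · refine ⟨Finset.univ.filter (fun j => p.2 k j ≠ 0), ?_, fun j => ⟨fun hj => ?_, fun hj => ?_⟩⟩
      · exact h4 k
      · simp only [Finset.mem_filter, Finset.mem_univ, true_and] at hj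
        rcases mem_Phi_iff.1 (h3 k j) with h | h
        · simpa [unitCircle] using h
        · exact absurd h hj
      · simp only [Finset.mem_filter, Finset.mem_univ, true_and, not_not] at hj
        exact hj
    · by_cases htk : p.1 k = 0
      · exact Or.inl htk
      by_cases htl : p.1 l = 0
      · exact Or.inr (Or.inl htl)
      exact Or.inr (Or.inr (fun j => h5 k l htk htl hkl j))
  · rintro ⟨⟨h1, h2⟩, h3, h4⟩
    refine ⟨h1, h2, fun k j => ?_, fun k => ?_, fun k l htk htl hkl j => ?_⟩
    · obtain ⟨S, _, hS⟩ := h3 k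
      by_cases hj : j ∈ S
      · exact Or.inl ((hS j).1 hj)
      · exact Or.inr ((hS j).2 hj)
    · obtain ⟨S, hcard, hS⟩ := h3 k
      rw [suppCard, ← hcard]
      congr 1
      ext j
      simp only [Finset.mem_filter, Finset.mem_univ, true_and]
      constructor
      · intro hne
        by_contra hj
        exact hne ((hS j).2 hj)
      · intro hj
        have := (hS j).1 hj
        simp only [unitCircle, mem_sphere_iff_norm, sub_zero] at this
        intro h0
        rw [h0] at this
        simpa using this
    · rcases h4 k l hkl with h | h | h
      · exact absurd h htk
      · exact absurd h htl
      · exact h j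

lemma isClosed_RawDelta : IsClosed (RawDelta n) := by
  rw [RawDelta_eq]
  apply IsClosed.inter
  · apply IsClosed.inter
    · have : {p : PSpace n | ∀ k, 0 ≤ p.1 k} = ⋂ k, {p : PSpace n | 0 ≤ p.1 k} := by
        ext p; simp
      rw [this]
      exact isClosed_iInter (fun k => isClosed_le continuous_const (cont_eval1 k))
    · exact isClosed_eq (continuous_finset_sum _ (fun k _ => cont_eval1 k)) continuous_const
  · apply IsClosed.inter
    · apply isClosed_iInter
      intro k
      apply isClosed_iUnion_of_finite
      intro S
      by_cases hcard : S.card = (k : ℕ)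
      · have : {p : PSpace n | S.card = (k : ℕ) ∧
            ∀ j, (j ∈ S → p.2 k j ∈ unitCircle) ∧ (j ∉ S → p.2 k j = 0)} =
            ⋂ j : Fin n, {p : PSpace n |
              (j ∈ S → p.2 k j ∈ unitCircle) ∧ (j ∉ S → p.2 k j = 0)} := by
          ext p
          simp only [mem_setOf_eq, mem_iInter, hcard, true_and]
        rw [this]
        apply isClosed_iInter
        intro j
        by_cases hj : j ∈ S
        · have : {p : PSpace n |
              (j ∈ S → p.2 k j ∈ unitCircle) ∧ (j ∉ S → p.2 k j = 0)} =
              {p : PSpace n | p.2 k j ∈ unitCircle} := by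
            ext p; simp [hj]
          rw [this]
          exact isClosed_unitCircle.preimage (cont_eval2 k j)
        · have : {p : PSpace n |
              (j ∈ S → p.2 k j ∈ unitCircle) ∧ (j ∉ S → p.2 k j = 0)} =
              {p : PSpace n | p.2 k j = 0} := by
            ext p; simp [hj]
          rw [this]
          exact isClosed_eq (cont_eval2 k j) continuous_const
      · have : {p : PSpace n | S.card = (k : ℕ) ∧
            ∀ j, (j ∈ S → p.2 k j ∈ unitCircle) ∧ (j ∉ S → p.2 k j = 0)} = ∅ := by
          ext p; simp [hcard]
        rw [this]
        exact isClosed_empty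
    · apply isClosed_iInter
      intro k
      apply isClosed_iInter
      intro l
      by_cases hkl : k ≤ l
      · have : {p : PSpace n | k ≤ l → (p.1 k = 0 ∨ p.1 l = 0 ∨
            ∀ j, (p.2 k j = p.2 l j ∨ p.2 k j = 0))} =
            {p : PSpace n | p.1 k = 0} ∪ ({p : PSpace n | p.1 l = 0} ∪
              ⋂ j, ({p : PSpace n | p.2 k j = p.2 l j} ∪ {p : PSpace n | p.2 k j = 0})) := by
          ext p
          simp only [mem_setOf_eq, mem_union, mem_iInter, mem_union, mem_setOf_eq]
          constructor
          · intro h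
            rcases h hkl with h | h | h
            · exact Or.inl h
            · exact Or.inr (Or.inl h)
            · exact Or.inr (Or.inr h)
          · intro h _
            tauto
        rw [this]
        refine IsClosed.union ?_ (IsClosed.union ?_ (isClosed_iInter fun j => IsClosed.union ?_ ?_))
        · exact isClosed_eq (cont_eval1 k) continuous_const
        · exact isClosed_eq (cont_eval1 l) continuous_const
        · exact isClosed_eq (cont_eval2 k j) (cont_eval2 l j)
        · exact isClosed_eq (cont_eval2 k j) continuous_const
      · have : {p : PSpace n | k ≤ l → (p.1 k = 0 ∨ p.1 l = 0 ∨
            ∀ j, (p.2 k j = p.2 l j ∨ p.2 k j = 0))} = univ := by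
          ext p; simp [hkl]
        rw [this]
        exact isClosed_univ

end DPf
namespace DPf

variable {n : ℕ}

lemma isCompact_RawDelta : IsCompact (RawDelta n) := by
  have hK : IsCompact ((univ.pi (fun _ : Fin (n + 1) => Icc (0 : ℝ) 1)) ×ˢ
      (univ.pi (fun _ : Fin (n + 1) => univ.pi
        (fun _ : Fin n => Metric.closedBall (0 : ℂ) 1)))) := by
    apply IsCompact.prod
    · exact isCompact_univ_pi (fun _ => isCompact_Icc)
    · exact isCompact_univ_pi (fun _ => isCompact_univ_pi
        (fun _ => isCompact_closedBall 0 1))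
  apply IsCompact.of_isClosed_subset hK isClosed_RawDelta
  rintro p ⟨h1, h2, h3, -, -⟩
  constructor
  · intro k _
    refine ⟨h1 k, ?_⟩
    rw [← h2]
    exact Finset.single_le_sum (f := p.1) (fun i _ => h1 i) (Finset.mem_univ k)
  · intro k _
    intro j _
    rw [Metric.mem_closedBall, dist_zero_right]
    exact norm_le_one_of_mem_Phi (h3 k j)

instance : CompactSpace (RawDelta n) := isCompact_iff_compactSpace.mp isCompact_RawDelta

/-- The forward map on raw points, valued in the polydisk. -/
def Gmap : ↥(RawDelta n) → (Fin n → ↥(Metric.closedBall (0 : ℂ) 1)) := fun p j =>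
  ⟨∑ k, ((p.1.1 k : ℝ) : ℂ) * p.1.2 k j, by
    obtain ⟨h1, h2, h3, h4, h5⟩ := p.2
    rw [Metric.mem_closedBall, dist_zero_right, ← gamma_eq_sum h5 j]
    exact norm_gamma_le_one h1 h2 h3 j⟩

lemma Gmap_coe (p : ↥(RawDelta n)) (j : Fin n) :
    (Gmap p j : ℂ) = gammaCoord p.1.1 p.1.2 j := by
  obtain ⟨h1, h2, h3, h4, h5⟩ := p.2
  exact (gamma_eq_sum h5 j).symm

lemma Gmap_respects (p q : ↥(RawDelta n)) (h : deltaRel n p q) : Gmap p = Gmap q := by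
  funext j
  apply Subtype.ext
  show (∑ k, ((p.1.1 k : ℝ) : ℂ) * p.1.2 k j) = ∑ k, ((q.1.1 k : ℝ) : ℂ) * q.1.2 k j
  apply Finset.sum_congr rfl
  intro k _
  by_cases htk : p.1.1 k = 0
  · rw [htk, ← h.1, htk]
    simp
  · rw [h.1, h.2 k htk]

lemma continuous_Gmap : Continuous (Gmap (n := n)) := by
  apply continuous_pi
  intro j
  apply Continuous.subtype_mk
  apply continuous_finset_sum
  intro k _
  exact Continuous.mul
    (Complex.continuous_ofReal.comp ((cont_eval1 k).comp continuous_subtype_val))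
    ((cont_eval2 k j).comp continuous_subtype_val)

/-- The forward map on the quotient. -/
def Ghat : Quot (deltaRel n) → (Fin n → ↥(Metric.closedBall (0 : ℂ) 1)) :=
  Quot.lift Gmap Gmap_respects

lemma continuous_Ghat : Continuous (Ghat (n := n)) :=
  continuous_quot_lift _ continuous_Gmap

/-- The inverse map. -/
def Fmap : (Fin n → ↥(Metric.closedBall (0 : ℂ) 1)) → Quot (deltaRel n) := fun w =>
  Quot.mk _ ⟨(tov (fun j => (w j : ℂ)), xof (fun j => (w j : ℂ))), Finv_mem (fun j => by
    have := (w j).2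
    rwa [Metric.mem_closedBall, dist_zero_right] at this)⟩

lemma Ghat_Fmap (w : Fin n → ↥(Metric.closedBall (0 : ℂ) 1)) : Ghat (Fmap w) = w := by
  funext j
  apply Subtype.ext
  show (∑ k, ((tov (fun j => ((w j : ℂ))) k : ℝ) : ℂ) *
    xof (fun j => ((w j : ℂ))) k j) = (w j : ℂ)
  exact sum_tov_xof j

lemma Fmap_Ghat (q : Quot (deltaRel n)) : Fmap (Ghat q) = q := by
  induction q using Quot.ind with
  | _ p =>
    obtain ⟨h1, h2, h3, h4, h5⟩ := p.2
    have hwe : (fun j => ((Ghat (Quot.mk _ p) j : ℂ))) =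
        (fun j => gammaCoord p.1.1 p.1.2 j) := by
      funext j
      exact Gmap_coe p j
    show Fmap (Ghat (Quot.mk _ p)) = Quot.mk _ p
    rw [Fmap]
    apply Quot.sound
    constructor
    · show tov _ = p.1.1
      rw [hwe]
      exact tov_gamma_eq h1 h2 h3 h4 h5
    · intro k hk
      have hk'' : tov (fun j => ((Ghat (Quot.mk _ p) j : ℂ))) k ≠ 0 := hk
      rw [hwe] at hk''
      show xof _ k = p.1.2 k
      rw [hwe]
      have htk : p.1.1 k ≠ 0 := by
        rwa [tov_gamma_eq h1 h2 h3 h4 h5] at hk''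
      exact xof_gamma_eq h1 h2 h3 h4 h5 htk

/-- The bijection. -/
def GEquiv : Quot (deltaRel n) ≃ (Fin n → ↥(Metric.closedBall (0 : ℂ) 1)) where
  toFun := Ghat
  invFun := Fmap
  left_inv := Fmap_Ghat
  right_inv := Ghat_Fmap

end DPf



/-- `Δ(Φⁿ)` is homeomorphic to `(Δ(Φ))ⁿ` (each factor identified with the
closed unit disk), via the explicit map `γ` whose `j`-th coordinate is determined by the
first level `ℓ(z,j)` at which the `j`-th coordinate of the chain becomes nonzero. -/
theorem deltaPhiPow_homeomorph_prod (n : ℕ) :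
    ∃ γ : Quot (deltaRel n) ≃ₜ (Fin n → ↥(Metric.closedBall (0 : ℂ) 1)),
      ∀ (p : ↥(RawDelta n)) (j : Fin n),
        (↑(γ (Quot.mk _ p) j) : ℂ) = gammaCoord p.1.1 p.1.2 j := by
  refine ⟨Continuous.homeoOfEquivCompactToT2 (f := DPf.GEquiv) DPf.continuous_Ghat, ?_⟩
  intro p j
  exact DPf.Gmap_coe p j
end
end

section
/- Let P be the five-element poset {{1}, {−1}, U, L, Φ} with cover relations {1},{−1} < U, {1},{−1} < L, and U, L < Φ, and let ν(X) = |X⁻¹(U)| + |X⁻¹(L)| + 2|X⁻¹(Φ)| for X ∈ Pⁿ. For X ∈ 𝒫ₙ, the space B(X) = {z ∈ 𝔹ⁿ : z_α ∈ Δ(X(α)) for all α, and (z_α, z_β) ∈ U × L implies z_α = e^{iπt_α}, z_β = e^{i(πt_β+π)} with 0 ≤ t_β ≤ t_α ≤ 1} is homeomorphic to a closed ball of dimension ν(X). -/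
open Complex Set

noncomputable section

open scoped Classical

/-- The five elements of the poset `P = {{1}, {−1}, U, L, Φ}` (here `phi` denotes the
whole hyperfield `Φ`). -/
inductive PEl : Type
  | one : PEl
  | negone : PEl
  | U : PEl
  | L : PEl
  | phi : PEl
  deriving DecidableEq

/-- The subset of the closed unit disk `𝔹 ⊂ ℂ` with which `Δ(X(α))` is identified:
`Δ({1}) = {1}`, `Δ({−1}) = {−1}`, `Δ(U)` the upper half-circle, `Δ(L)` the lower
half-circle, and `Δ(Φ) = 𝔹`. -/
def DeltaSet : PEl → Set ℂ
  | .one => {1}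
  | .negone => {-1}
  | .U => {z | ‖z‖ = 1 ∧ 0 ≤ z.im}
  | .L => {z | ‖z‖ = 1 ∧ z.im ≤ 0}
  | .phi => Metric.closedBall 0 1

/-- `ν(X) = |X⁻¹(U)| + |X⁻¹(L)| + 2 |X⁻¹(Φ)|`. -/
def nu {n : ℕ} (X : Fin n → PEl) : ℕ :=
  (Finset.univ.filter fun α => X α = PEl.U).card +
  (Finset.univ.filter fun α => X α = PEl.L).card +
  2 * (Finset.univ.filter fun α => X α = PEl.phi).card

/-- Membership in `𝒫ₙ ⊂ Pⁿ` (indices `Fin (n+1)`, last index playing the role of `n`):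
`X(α) = {1}` iff `α = n`; some `α ∈ [n−1]` has `X(α) ∈ {{−1}, U, L}`; and whenever
`X(α) ∈ {U, L}` there is `β ∈ [n−1] \ {α}` with `X(β) ∈ {U, L, {−1}}` and
`X(β) ≠ X(α)`. -/
def memPn {n : ℕ} (X : Fin (n + 1) → PEl) : Prop :=
  (∀ α, X α = PEl.one ↔ α = Fin.last n) ∧
  (∃ α, α ≠ Fin.last n ∧ (X α = PEl.negone ∨ X α = PEl.U ∨ X α = PEl.L)) ∧
  (∀ α, (X α = PEl.U ∨ X α = PEl.L) →
    ∃ β, β ≠ α ∧ β ≠ Fin.last n ∧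
      (X β = PEl.U ∨ X β = PEl.L ∨ X β = PEl.negone) ∧ X β ≠ X α)

/-- The space `B(X) ⊆ 𝔹ⁿ`. -/
def BX {n : ℕ} (X : Fin (n + 1) → PEl) : Set (Fin (n + 1) → ℂ) :=
  {z | (∀ α, z α ∈ DeltaSet (X α)) ∧
    ∀ α β, X α = PEl.U → X β = PEl.L →
      ∃ tα tβ : ℝ, 0 ≤ tβ ∧ tβ ≤ tα ∧ tα ≤ 1 ∧
        z α = Complex.exp ((Real.pi * tα : ℝ) * Complex.I) ∧
        z β = Complex.exp ((Real.pi * tβ + Real.pi : ℝ) * Complex.I)}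


/-! The coordinates of `z ∈ B(X)` with `X α ∈ {{1}, {−1}}` are constant, those with `X α = Φ`
range over the disk, and a point of the upper (lower) half-circle is `e^{iπt}` (`−e^{iπt}`) for a
unique `t ∈ [0,1]`, recovered as `arccos (Re z) / π` (of `−z`). So `B(X)` is homeomorphic to the
product of a polydisk with the polytope `{(s, t) ∈ [0,1]^U × [0,1]^L : t_β ≤ s_α}`. That product is
a compact convex body with nonempty interior in a real vector space of dimension `ν(X)`, hence
homeomorphic to the closed `ν(X)`-ball. -/

open Real Metric

theorem Convex.nonempty_homeomorph_closedBall {E : Type*} [NormedAddCommGroup E]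
    [NormedSpace ℝ E] [FiniteDimensional ℝ E] {K : Set E} (hconv : Convex ℝ K)
    (hcpt : IsCompact K) (hint : (interior K).Nonempty) {m : ℕ} (hdim : Module.finrank ℝ E = m) :
    Nonempty (K ≃ₜ closedBall (0 : EuclideanSpace ℝ (Fin m)) 1) := by
  let f : E ≃L[ℝ] EuclideanSpace ℝ (Fin m) :=
    .ofFinrankEq (hdim.trans finrank_euclideanSpace_fin.symm)
  let g := f.toHomeomorph
  have hcpt' : IsCompact (g '' K) := hcpt.image g.continuous
  obtain ⟨h, -, hcl, -⟩ := exists_homeomorph_image_interior_closure_frontier_eq_unitBall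
    (hconv.linear_image f.toLinearMap) (g.image_interior K ▸ hint.image g) hcpt'.isBounded
  exact ⟨(g.image K).trans ((h.image _).trans (.setCongr (hcpt'.isClosed.closure_eq ▸ hcl)))⟩

def arcPoint (t : ℝ) : ℂ := exp (↑(π * t) * I)

def arcParam (z : ℂ) : ℝ := arccos z.re / π

@[fun_prop]
lemma continuous_arcPoint : Continuous arcPoint := by
  unfold arcPoint; fun_prop

@[fun_prop]
lemma continuous_arcParam : Continuous arcParam := by
  unfold arcParam; fun_prop

lemma exp_pi_mul_add_pi_mul_I (t : ℝ) : exp (↑(π * t + π) * I) = -arcPoint t := by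
  rw [arcPoint, ofReal_add, add_mul, Complex.exp_add, exp_pi_mul_I, mul_neg_one]

lemma mem_deltaSet_L_iff {z : ℂ} : z ∈ DeltaSet .L ↔ -z ∈ DeltaSet .U := by
  simp [DeltaSet]

lemma arcParam_mem_Icc (z : ℂ) : arcParam z ∈ Icc 0 1 :=
  ⟨div_nonneg (arccos_nonneg _) pi_pos.le, div_le_one_of_le₀ (arccos_le_pi _) pi_pos.le⟩

lemma arcPoint_mem_deltaSet_U {t : ℝ} (ht : t ∈ Icc 0 1) : arcPoint t ∈ DeltaSet .U := by
  refine ⟨norm_exp_ofReal_mul_I _, ?_⟩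
  rw [arcPoint, exp_ofReal_mul_I_im]
  exact sin_nonneg_of_nonneg_of_le_pi (by nlinarith [pi_pos, ht.1])
    (by nlinarith [pi_pos, ht.2])

lemma arcParam_arcPoint {t : ℝ} (ht : t ∈ Icc 0 1) : arcParam (arcPoint t) = t := by
  rw [arcParam, arcPoint, exp_ofReal_mul_I_re,
    arccos_cos (by nlinarith [pi_pos, ht.1]) (by nlinarith [pi_pos, ht.2]),
    mul_div_cancel_left₀ _ pi_ne_zero]

lemma arcPoint_arcParam {z : ℂ} (hz : z ∈ DeltaSet .U) : arcPoint (arcParam z) = z := by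
  obtain ⟨hnorm, him⟩ := hz
  have hsq : z.re ^ 2 + z.im ^ 2 = 1 := by
    simpa [hnorm, normSq_apply, sq] using (Complex.sq_norm z).symm
  have hre : z.re ∈ Icc (-1) 1 := ⟨by nlinarith, by nlinarith⟩
  rw [arcPoint, arcParam, mul_div_cancel₀ _ pi_ne_zero]
  apply Complex.ext
  · rw [exp_ofReal_mul_I_re, cos_arccos hre.1 hre.2]
  · rw [exp_ofReal_mul_I_im, sin_arccos, show 1 - z.re ^ 2 = z.im ^ 2 by linarith,
      sqrt_sq him]

def orderPolytope (ι κ : Type*) : Set ((ι → ℝ) × (κ → ℝ)) :=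
  ((univ.pi fun _ => Icc 0 1) ×ˢ (univ.pi fun _ => Icc 0 1)) ∩ {p | ∀ i j, p.2 j ≤ p.1 i}

section orderPolytope

variable {ι κ : Type*}

lemma convex_orderPolytope : Convex ℝ (orderPolytope ι κ) := by
  refine ((convex_pi fun _ _ => convex_Icc 0 1).prod
    (convex_pi fun _ _ => convex_Icc 0 1)).inter ?_
  intro p hp q hq a b ha hb _ i j
  exact add_le_add (mul_le_mul_of_nonneg_left (hp i j) ha)
    (mul_le_mul_of_nonneg_left (hq i j) hb)

lemma isCompact_orderPolytope : IsCompact (orderPolytope ι κ) := by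
  refine ((isCompact_univ_pi fun _ => isCompact_Icc).prod
    (isCompact_univ_pi fun _ => isCompact_Icc)).inter_right ?_
  simp only [ofPred_forall]
  exact isClosed_iInter fun i => isClosed_iInter fun j => isClosed_le (by fun_prop) (by fun_prop)

lemma nonempty_interior_orderPolytope [Finite ι] [Finite κ] :
    (interior (orderPolytope ι κ)).Nonempty := by
  let V := (univ.pi fun _ : ι => Ioo (1 / 2 : ℝ) 1) ×ˢ (univ.pi fun _ : κ => Ioo (0 : ℝ) (1 / 2))
  have hV : IsOpen V :=
    (isOpen_set_pi finite_univ fun _ _ => isOpen_Ioo).prod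
      (isOpen_set_pi finite_univ fun _ _ => isOpen_Ioo)
  have hVsub : V ⊆ orderPolytope ι κ := by
    rintro ⟨s, t⟩ ⟨hs, ht⟩
    simp only [mem_univ_pi, mem_Ioo] at hs ht
    refine ⟨⟨fun i _ => ⟨by linarith [hs i], (hs i).2.le⟩,
      fun j _ => ⟨(ht j).1.le, by linarith [ht j]⟩⟩, fun i j => by linarith [hs i, ht j]⟩
  refine ⟨(fun _ => 3 / 4, fun _ => 1 / 4), interior_maximal hVsub hV ⟨?_, ?_⟩⟩ <;>
    simp only [mem_univ_pi, mem_Ioo] <;> norm_num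

end orderPolytope

namespace BX

variable {n : ℕ} (X : Fin (n + 1) → PEl)

abbrev ModelSpace : Type :=
  ({α // X α = .phi} → ℂ) × ({α // X α = .U} → ℝ) × ({α // X α = .L} → ℝ)

def modelSet : Set (ModelSpace X) :=
  closedBall 0 1 ×ˢ orderPolytope {α // X α = .U} {α // X α = .L}

lemma finrank_modelSpace : Module.finrank ℝ (ModelSpace X) = nu X := by
  simp only [Module.finrank_prod, Module.finrank_pi_fintype, Complex.finrank_real_complex,
    Module.finrank_self, Fintype.card_subtype, Finset.sum_const, smul_eq_mul,
    Finset.card_univ, nu]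
  ring

lemma convex_modelSet : Convex ℝ (modelSet X) :=
  (convex_closedBall 0 1).prod convex_orderPolytope

lemma isCompact_modelSet : IsCompact (modelSet X) :=
  (isCompact_closedBall 0 1).prod isCompact_orderPolytope

lemma nonempty_interior_modelSet : (interior (modelSet X)).Nonempty := by
  rw [modelSet, interior_prod_eq]
  exact .prod ⟨0, ball_subset_interior_closedBall (mem_ball_self one_pos)⟩
    nonempty_interior_orderPolytope

def toModel (z : Fin (n + 1) → ℂ) : ModelSpace X :=
  (fun a => z a, fun u => arcParam (z u), fun l => arcParam (-z l))

def ofModel (p : ModelSpace X) : Fin (n + 1) → ℂ := fun α =>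
  if h : X α = .phi then p.1 ⟨α, h⟩
  else if h : X α = .U then arcPoint (p.2.1 ⟨α, h⟩)
  else if h : X α = .L then -arcPoint (p.2.2 ⟨α, h⟩)
  else if X α = .one then 1 else -1

variable {X}

section ofModel

variable {p : ModelSpace X} {α : Fin (n + 1)}

lemma ofModel_of_phi (h : X α = .phi) : ofModel X p α = p.1 ⟨α, h⟩ := by
  simp [ofModel, h]

lemma ofModel_of_U (h : X α = .U) : ofModel X p α = arcPoint (p.2.1 ⟨α, h⟩) := by
  simp [ofModel, h]

lemma ofModel_of_L (h : X α = .L) : ofModel X p α = -arcPoint (p.2.2 ⟨α, h⟩) := by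
  simp [ofModel, h]

lemma ofModel_of_one (h : X α = .one) : ofModel X p α = 1 := by
  simp [ofModel, h]

lemma ofModel_of_negone (h : X α = .negone) : ofModel X p α = -1 := by
  simp [ofModel, h]

end ofModel

lemma continuous_toModel : Continuous (toModel X) := by
  unfold toModel; fun_prop

lemma continuous_ofModel : Continuous (ofModel X) := by
  refine continuous_pi fun α => ?_
  unfold ofModel
  split_ifs <;> fun_prop

lemma toModel_mem {z : Fin (n + 1) → ℂ} (hz : z ∈ BX X) : toModel X z ∈ modelSet X := by
  obtain ⟨hΔ, horder⟩ := hz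
  refine ⟨?_, ⟨fun u _ => arcParam_mem_Icc _, fun l _ => arcParam_mem_Icc _⟩, fun u l => ?_⟩
  · rw [mem_closedBall_zero_iff, pi_norm_le_iff_of_nonneg zero_le_one]
    intro a
    simpa [toModel, a.2, DeltaSet] using hΔ a
  · obtain ⟨s, t, ht0, hts, hs1, hzu, hzl⟩ := horder u l u.2 l.2
    change arcParam (-z l) ≤ arcParam (z u)
    rw [show z u = arcPoint s from hzu, hzl, exp_pi_mul_add_pi_mul_I, neg_neg,
      arcParam_arcPoint ⟨ht0.trans hts, hs1⟩, arcParam_arcPoint ⟨ht0, hts.trans hs1⟩]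
    exact hts

lemma ofModel_mem {p : ModelSpace X} (hp : p ∈ modelSet X) : ofModel X p ∈ BX X := by
  obtain ⟨hw, ⟨hs, ht⟩, hts⟩ := hp
  refine ⟨fun α => ?_, fun α β hα hβ => ?_⟩
  · cases h : X α
    · rw [ofModel_of_one h]; exact mem_singleton _
    · rw [ofModel_of_negone h]; exact mem_singleton _
    · rw [ofModel_of_U h]; exact arcPoint_mem_deltaSet_U (hs _ (mem_univ _))
    · rw [ofModel_of_L h, mem_deltaSet_L_iff, neg_neg]
      exact arcPoint_mem_deltaSet_U (ht _ (mem_univ _))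
    · rw [ofModel_of_phi h]
      exact mem_closedBall_zero_iff.2
        ((norm_le_pi_norm p.1 _).trans (mem_closedBall_zero_iff.1 hw))
  · exact ⟨_, _, (ht _ (mem_univ _)).1, hts ⟨α, hα⟩ ⟨β, hβ⟩, (hs _ (mem_univ _)).2,
      ofModel_of_U hα, by rw [ofModel_of_L hβ, exp_pi_mul_add_pi_mul_I]⟩

lemma toModel_ofModel {p : ModelSpace X} (hp : p ∈ modelSet X) :
    toModel X (ofModel X p) = p := by
  obtain ⟨-, ⟨hs, ht⟩, -⟩ := hp
  refine Prod.ext (funext fun a => ofModel_of_phi a.2)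
    (Prod.ext (funext fun u => ?_) (funext fun l => ?_))
  · simp only [toModel, ofModel_of_U u.2, arcParam_arcPoint (hs u (mem_univ _))]
  · simp only [toModel, ofModel_of_L l.2, neg_neg, arcParam_arcPoint (ht l (mem_univ _))]

lemma ofModel_toModel {z : Fin (n + 1) → ℂ} (hz : z ∈ BX X) : ofModel X (toModel X z) = z := by
  funext α
  have hΔ := hz.1 α
  cases h : X α <;> rw [h] at hΔ
  · rw [ofModel_of_one h]; exact hΔ.symm
  · rw [ofModel_of_negone h]; exact hΔ.symm
  · rw [ofModel_of_U h]; exact arcPoint_arcParam hΔ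
  · rw [ofModel_of_L h]
    exact neg_eq_iff_eq_neg.2 (arcPoint_arcParam (mem_deltaSet_L_iff.1 hΔ))
  · exact ofModel_of_phi h

def homeomorphModelSet : BX X ≃ₜ modelSet X where
  toFun z := ⟨toModel X z, toModel_mem z.2⟩
  invFun p := ⟨ofModel X p, ofModel_mem p.2⟩
  left_inv z := Subtype.ext (ofModel_toModel z.2)
  right_inv p := Subtype.ext (toModel_ofModel p.2)
  continuous_toFun := (continuous_toModel.comp continuous_subtype_val).subtype_mk _
  continuous_invFun := (continuous_ofModel.comp continuous_subtype_val).subtype_mk _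

end BX

theorem BX_isBall_general (n : ℕ) (X : Fin (n + 1) → PEl) :
    Nonempty (↥(BX X) ≃ₜ
      ↥(Metric.closedBall (0 : EuclideanSpace ℝ (Fin (nu X))) 1)) := by
  obtain ⟨e⟩ := (BX.convex_modelSet X).nonempty_homeomorph_closedBall (BX.isCompact_modelSet X)
    (BX.nonempty_interior_modelSet X) (BX.finrank_modelSpace X)
  exact ⟨BX.homeomorphModelSet.trans e⟩

/-- For `X ∈ 𝒫ₙ`, the space `B(X)` is homeomorphic to a closed ball of
dimension `ν(X)`. -/
theorem BX_isBall (n : ℕ) (X : Fin (n + 1) → PEl) (hX : memPn X) :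
    Nonempty (↥(BX X) ≃ₜ
      ↥(Metric.closedBall (0 : EuclideanSpace ℝ (Fin (nu X))) 1)) :=
  BX_isBall_general n X
end
end
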